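/- arXiv:math/9901086 — 6 statements merged into one kernel-verified Lean document; each statement's English description precedes it below -/
import Mathlib

section
/- Let q : ℝ² → M_{k×(n−k)}(ℂ) be smooth, and let u = [[0, q],[−q*, 0]] and Q₂ = [[−i q q*, i q_x],[i q_x*, i q* q]] be the associated block matrices in u(n). Then u satisfies u_t = (Q₂)_x + [u, Q₂] identically if and only if for every λ ∈ ℂ the zero-curvature equation ∂_x(aλ² + uλ + Q₂) − ∂_t(aλ + u) + [aλ + u, aλ² + uλ + Q₂] = 0 holds identically in (x,t), where a = (i/2)·diag(I_k, −I_{n−k}). -/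
/-!
Expand the zero-curvature expression in powers of `λ`. The `λ³` and `λ²` coefficients vanish
because `[a, a] = 0` and `[a, u] + [u, a] = 0`. The `λ` coefficient is `u_x - [Q₂, a]`, and it
vanishes identically: commuting with `a = (i/2)·diag(1, -1)` kills the diagonal blocks of `Q₂` and
multiplies its off-diagonal blocks by `∓ i`, which turns them into those of `u_x`. So the
expression is the `λ`-independent term `(Q₂)_x − u_t + [u, Q₂]`, and the equivalence follows.
-/

open Matrix

attribute [local instance] Matrix.normedAddCommGroup Matrix.normedSpace

section MatrixDeriv

variable {𝕜 : Type*} [NontriviallyNormedField 𝕜] {l m n p : Type*} {x : 𝕜}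

theorem hasDerivAt_matrix {E : Type*} [NormedAddCommGroup E] [NormedSpace 𝕜 E] [Fintype n]
    {f : 𝕜 → Matrix m n E} {f' : Matrix m n E} :
    HasDerivAt f f' x ↔ ∀ i j, HasDerivAt (fun y => f y i j) (f' i j) x :=
  hasDerivAt_pi.trans (forall_congr' fun _ => hasDerivAt_pi)

theorem HasDerivAt.matrix_mul {𝔸 : Type*} [NormedRing 𝔸] [NormedAlgebra 𝕜 𝔸]
    [Fintype n] [Fintype p]
    {f : 𝕜 → Matrix m n 𝔸} {g : 𝕜 → Matrix n p 𝔸} {f' : Matrix m n 𝔸} {g' : Matrix n p 𝔸}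
    (hf : HasDerivAt f f' x) (hg : HasDerivAt g g' x) :
    HasDerivAt (fun y => f y * g y) (f' * g x + f x * g') x := by
  rw [hasDerivAt_matrix] at *
  intro i j
  simp only [mul_apply, Matrix.add_apply, ← Finset.sum_add_distrib]
  exact HasDerivAt.fun_sum fun k _ => (hf i k).fun_mul (hg k j)

theorem HasDerivAt.matrix_conjTranspose [Fintype m] [Fintype n] {f : ℝ → Matrix m n ℂ}
    {f' : Matrix m n ℂ} {x : ℝ} (hf : HasDerivAt f f' x) : HasDerivAt (fun y => (f y)ᴴ) f'ᴴ x := by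
  rw [hasDerivAt_matrix] at *
  exact fun i j => (hf j i).star

theorem HasDerivAt.matrix_fromBlocks {E : Type*} [NormedAddCommGroup E] [NormedSpace 𝕜 E]
    [Fintype n] [Fintype p]
    {A : 𝕜 → Matrix l n E} {B : 𝕜 → Matrix l p E} {C : 𝕜 → Matrix m n E}
    {D : 𝕜 → Matrix m p E} {A' : Matrix l n E} {B' : Matrix l p E} {C' : Matrix m n E}
    {D' : Matrix m p E} (hA : HasDerivAt A A' x) (hB : HasDerivAt B B' x)
    (hC : HasDerivAt C C' x) (hD : HasDerivAt D D' x) :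
    HasDerivAt (fun y => fromBlocks (A y) (B y) (C y) (D y)) (fromBlocks A' B' C' D') x := by
  rw [hasDerivAt_matrix] at *
  rintro (i | i) (j | j)
  exacts [hA i j, hB i j, hC i j, hD i j]

end MatrixDeriv

theorem fromBlocks_mul_sub_mul_fromBlocks_one_neg_one {R m n : Type*} [CommRing R] [Fintype m]
    [Fintype n] [DecidableEq m] [DecidableEq n] (c : R) (A : Matrix m m R) (B : Matrix m n R)
    (C : Matrix n m R) (D : Matrix n n R) :
    fromBlocks A B C D * (c • fromBlocks 1 0 0 (-1))
        - (c • fromBlocks 1 0 0 (-1)) * fromBlocks A B C D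
      = fromBlocks 0 (-(2 * c) • B) ((2 * c) • C) 0 := by
  simp only [fromBlocks_smul, fromBlocks_multiply, smul_zero, smul_neg, Matrix.mul_smul,
    Matrix.smul_mul, Matrix.mul_one, Matrix.one_mul, Matrix.mul_zero, Matrix.zero_mul,
    Matrix.mul_neg, Matrix.neg_mul, sub_eq_add_neg, fromBlocks_neg, fromBlocks_add]
  congr 1 <;> module

theorem fromBlocks_I_smul_commutator_diag {m n : Type*} [Fintype m] [Fintype n] [DecidableEq m]
    [DecidableEq n] (A : Matrix m m ℂ) (B : Matrix m n ℂ) (C : Matrix n m ℂ) (D : Matrix n n ℂ) :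
    fromBlocks A (Complex.I • B) (Complex.I • C) D * ((Complex.I / 2) • fromBlocks 1 0 0 (-1))
        - ((Complex.I / 2) • fromBlocks 1 0 0 (-1)) * fromBlocks A (Complex.I • B) (Complex.I • C) D
      = fromBlocks 0 B (-C) 0 := by
  have hI : 2 * (Complex.I / 2) * Complex.I = -1 := by
    rw [mul_div_cancel₀ _ two_ne_zero, Complex.I_mul_I]
  rw [fromBlocks_mul_sub_mul_fromBlocks_one_neg_one, smul_smul, neg_mul, hI, neg_neg, one_smul,
    smul_smul, hI, neg_one_smul]

theorem commutator_smul_add_pencil {R A : Type*} [CommRing R] [Ring A] [Algebra R A]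
    (l : R) (a u Q : A) :
    (l • a + u) * (l ^ 2 • a + l • u + Q) - (l ^ 2 • a + l • u + Q) * (l • a + u)
      = l • (a * Q - Q * a) + (u * Q - Q * u) := by
  simp only [mul_add, add_mul, smul_mul_assoc, mul_smul_comm, smul_sub]
  module

theorem zeroCurvature_pencil_eq {ι : Type*} [Fintype ι] [DecidableEq ι] (a : Matrix ι ι ℂ)
    (U V : ℝ → ℝ → Matrix ι ι ℂ) {x t : ℝ}
    (hU : HasDerivAt (fun y => U y t) (V x t * a - a * V x t) x)
    (hV : DifferentiableAt ℝ (fun y => V y t) x) (lam : ℂ) :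
    deriv (fun y => lam ^ 2 • a + lam • U y t + V y t) x - deriv (fun s => lam • a + U x s) t
        + ((lam • a + U x t) * (lam ^ 2 • a + lam • U x t + V x t)
          - (lam ^ 2 • a + lam • U x t + V x t) * (lam • a + U x t))
      = deriv (fun y => V y t) x - deriv (fun s => U x s) t + (U x t * V x t - V x t * U x t) := by
  have hx : deriv (fun y => lam ^ 2 • a + lam • U y t + V y t) x
      = 0 + lam • (V x t * a - a * V x t) + deriv (fun y => V y t) x :=
    (((hasDerivAt_const x (lam ^ 2 • a)).fun_add (hU.fun_const_smul lam)).fun_add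
      hV.hasDerivAt).deriv
  have ht : deriv (fun s => lam • a + U x s) t = deriv (fun s => U x s) t := deriv_const_add _
  rw [hx, ht, commutator_smul_add_pencil]
  module

theorem stmt2_general (k m : ℕ)
    (a : Matrix (Fin k ⊕ Fin m) (Fin k ⊕ Fin m) ℂ)
    (ha : a = (Complex.I / 2) • Matrix.fromBlocks 1 0 0 (-1))
    (q : ℝ → ℝ → Matrix (Fin k) (Fin m) ℂ)
    (hq : ContDiff ℝ (⊤ : ℕ∞) fun p : ℝ × ℝ => q p.1 p.2)
    -- partial derivatives of q
    (qx : ℝ → ℝ → Matrix (Fin k) (Fin m) ℂ)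
    (hqx : ∀ x t, qx x t = deriv (fun y => q y t) x)
    -- the associated block matrices u and Q₂
    (u Q₂ : ℝ → ℝ → Matrix (Fin k ⊕ Fin m) (Fin k ⊕ Fin m) ℂ)
    (hu : ∀ x t, u x t = Matrix.fromBlocks 0 (q x t) (-(q x t)ᴴ) 0)
    (hQ₂ : ∀ x t, Q₂ x t = Matrix.fromBlocks
        ((-Complex.I) • (q x t * (q x t)ᴴ)) (Complex.I • qx x t)
        (Complex.I • (qx x t)ᴴ) (Complex.I • ((q x t)ᴴ * q x t))) :
    -- u_t = (Q₂)_x + [u, Q₂]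
    (∀ x t, deriv (fun s => u x s) t
        = deriv (fun y => Q₂ y t) x + (u x t * Q₂ x t - Q₂ x t * u x t))
    ↔
    -- zero-curvature equation for every λ
    (∀ lam : ℂ, ∀ x t : ℝ,
      deriv (fun y => lam ^ 2 • a + lam • u y t + Q₂ y t) x
        - deriv (fun s => lam • a + u x s) t
        + ((lam • a + u x t) * (lam ^ 2 • a + lam • u x t + Q₂ x t)
            - (lam ^ 2 • a + lam • u x t + Q₂ x t) * (lam • a + u x t))
      = 0) := by
  have hq_x (t : ℝ) : ContDiff ℝ (⊤ : ℕ∞) fun y => q y t :=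
    hq.comp (contDiff_id.prodMk contDiff_const)
  have hq_deriv (x t : ℝ) : HasDerivAt (fun y => q y t) (qx x t) x :=
    hqx x t ▸ ((hq_x t).differentiable (by simp) x).hasDerivAt
  have hqx_diff (x t : ℝ) : DifferentiableAt ℝ (fun y => qx y t) x := by
    rw [show (fun y => qx y t) = deriv fun y => q y t from funext fun y => hqx y t]
    exact (contDiff_infty_iff_deriv.mp (hq_x t)).2.differentiable (by simp) x
  have hu_x (x t : ℝ) : HasDerivAt (fun y => u y t) (Q₂ x t * a - a * Q₂ x t) x := by
    have h := (hasDerivAt_const x 0).matrix_fromBlocks (hq_deriv x t)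
      (hq_deriv x t).matrix_conjTranspose.neg (hasDerivAt_const x 0)
    rw [hQ₂, ha, fromBlocks_I_smul_commutator_diag]
    exact (funext fun y => hu y t) ▸ h
  have hQ₂_x (x t : ℝ) : DifferentiableAt ℝ (fun y => Q₂ y t) x := by
    simp only [hQ₂]
    exact ((((hq_deriv x t).matrix_mul (hq_deriv x t).matrix_conjTranspose).fun_const_smul _
      ).matrix_fromBlocks ((hqx_diff x t).hasDerivAt.fun_const_smul _)
      ((hqx_diff x t).hasDerivAt.matrix_conjTranspose.fun_const_smul _)
      (((hq_deriv x t).matrix_conjTranspose.matrix_mul (hq_deriv x t)).fun_const_smul _)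
      ).differentiableAt
  simp only [zeroCurvature_pencil_eq a u Q₂ (hu_x _ _) (hQ₂_x _ _), forall_const]
  refine forall₂_congr fun x t => ?_
  rw [sub_add_eq_add_sub, sub_eq_zero, eq_comm]

/-- For smooth `q : ℝ² → M_{k×(n−k)}(ℂ)` with associated block matrices
`u = [[0,q],[−q*,0]]` and `Q₂ = [[−iqq*, iq_x],[iq_x*, iq*q]]`, `u` satisfies
`u_t = (Q₂)_x + [u, Q₂]` iff for every `λ ∈ ℂ` the zero-curvature equation
`∂_x(aλ² + uλ + Q₂) − ∂_t(aλ + u) + [aλ + u, aλ² + uλ + Q₂] = 0` holds identically,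
where `a = (i/2)·diag(I_k, −I_{n−k})`. -/
theorem stmt2 (k m : ℕ) (hk : 0 < k) (hm : 0 < m)
    (a : Matrix (Fin k ⊕ Fin m) (Fin k ⊕ Fin m) ℂ)
    (ha : a = (Complex.I / 2) • Matrix.fromBlocks 1 0 0 (-1))
    (q : ℝ → ℝ → Matrix (Fin k) (Fin m) ℂ)
    (hq : ContDiff ℝ (⊤ : ℕ∞) fun p : ℝ × ℝ => q p.1 p.2)
    -- partial derivatives of q
    (qx : ℝ → ℝ → Matrix (Fin k) (Fin m) ℂ)
    (hqx : ∀ x t, qx x t = deriv (fun y => q y t) x)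
    -- the associated block matrices u and Q₂
    (u Q₂ : ℝ → ℝ → Matrix (Fin k ⊕ Fin m) (Fin k ⊕ Fin m) ℂ)
    (hu : ∀ x t, u x t = Matrix.fromBlocks 0 (q x t) (-(q x t)ᴴ) 0)
    (hQ₂ : ∀ x t, Q₂ x t = Matrix.fromBlocks
        ((-Complex.I) • (q x t * (q x t)ᴴ)) (Complex.I • qx x t)
        (Complex.I • (qx x t)ᴴ) (Complex.I • ((q x t)ᴴ * q x t))) :
    -- u_t = (Q₂)_x + [u, Q₂]
    (∀ x t, deriv (fun s => u x s) t
        = deriv (fun y => Q₂ y t) x + (u x t * Q₂ x t - Q₂ x t * u x t))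
    ↔
    -- zero-curvature equation for every λ
    (∀ lam : ℂ, ∀ x t : ℝ,
      deriv (fun y => lam ^ 2 • a + lam • u y t + Q₂ y t) x
        - deriv (fun s => lam • a + u x s) t
        + ((lam • a + u x t) * (lam ^ 2 • a + lam • u x t + Q₂ x t)
            - (lam ^ 2 • a + lam • u x t + Q₂ x t) * (lam • a + u x t))
      = 0) :=
  stmt2_general k m a ha q hq qx hqx u Q₂ hu hQ₂
end

section
/- (Injectivity of the development correspondence.) Let a ∈ u(n) be a fixed diagonal matrix and let f, g : ℝ → U(n) be smooth maps such that f(x) a f(x)⁻¹ = g(x) a g(x)⁻¹ for all x, such that f⁻¹f_x(x) ∈ u(n)_a^⊥ and g⁻¹g_x(x) ∈ u(n)_a^⊥ for all x, and such that f(x) → I and g(x) → I as x → −∞. Then f = g. -/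
open Matrix Filter

attribute [local instance] Matrix.normedAddCommGroup Matrix.normedSpace

/-- The centralizer `u(n)_a = {y ∈ u(n) : [y,a] = 0}` of `a` in `u(n)`. -/
def uCent (n : ℕ) (a : Matrix (Fin n) (Fin n) ℂ) : Set (Matrix (Fin n) (Fin n) ℂ) :=
  {y | yᴴ = -y ∧ y * a = a * y}

/-- The orthogonal complement `u(n)_a^⊥` of `u(n)_a` in `u(n)` with respect to the
inner product `⟨x,y⟩ = −tr(xy)`. -/
def uPerp (n : ℕ) (a : Matrix (Fin n) (Fin n) ℂ) : Set (Matrix (Fin n) (Fin n) ℂ) :=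
  {y | yᴴ = -y ∧ ∀ z ∈ uCent n a, -(y * z).trace = 0}

/-!
Put `h = g⁻¹ f`. The orbit condition says that `h` commutes with `a`, hence so do `h'` and the
logarithmic derivative `h⁻¹ h'`, which is skew-Hermitian because `h` is unitary: `h⁻¹ h' ∈ u(n)_a`.
On the other hand `h⁻¹ h' = f⁻¹ f' - h⁻¹ (g⁻¹ g') h`, and conjugation by `h` preserves `u(n)_a`
and the trace form, so `h⁻¹ h' ∈ u(n)_a^⊥`. Thus `h' = 0`, `h` is constant, and `h → I` at `-∞`
forces `h = I`.
-/

section MatrixCalculus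

variable {l m p 𝕜 R : Type*} [Fintype l] [Fintype m] [Fintype p]
  [NontriviallyNormedField 𝕜] [CompleteSpace 𝕜] [NormedRing R] [NormedAlgebra 𝕜 R]
  [FiniteDimensional 𝕜 R]

noncomputable def Matrix.mulCLM : Matrix l m R →L[𝕜] Matrix m p R →L[𝕜] Matrix l p R :=
  LinearMap.toContinuousLinearMap
    (LinearMap.toContinuousLinearMap.toLinearMap ∘ₗ mulLinearMap 𝕜)

theorem HasDerivAt.matrix_mul_s5 {u : 𝕜 → Matrix l m R} {v : 𝕜 → Matrix m p R}
    {u' : Matrix l m R} {v' : Matrix m p R} {x : 𝕜}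
    (hu : HasDerivAt u u' x) (hv : HasDerivAt v v' x) :
    HasDerivAt (fun t => u t * v t) (u' * v x + u x * v') x := by
  rw [add_comm]
  exact (Matrix.mulCLM (𝕜 := 𝕜)).hasDerivAt_of_bilinear (fun _ => hu) (fun _ => hv)

theorem HasDerivAt.commute_of_forall_commute {u : 𝕜 → Matrix m m R} {u' a : Matrix m m R}
    {x : 𝕜} (hu : HasDerivAt u u' x) (hcomm : ∀ t, Commute (u t) a) : Commute u' a := by
  have hright : HasDerivAt (fun t => u t * a) (u' * a) x := by
    simpa using hu.matrix_mul_s5 (hasDerivAt_const x a)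
  have hleft : HasDerivAt (fun t => u t * a) (a * u') x := by
    simpa [(hcomm _).eq] using (hasDerivAt_const x a).matrix_mul_s5 hu
  exact hright.unique hleft

end MatrixCalculus

section Unitary

variable {R : Type*} [Monoid R] [StarMul R] {u v a : R}

theorem Commute.star_left_of_mem_unitary (hu : u ∈ unitary R) (h : Commute u a) :
    Commute (star u) a :=
  (commute_unitary_iff_star_right_conjugate (Unitary.star_mem hu)).mpr <| by
    simpa using (commute_unitary_iff_star_left_conjugate hu).mp h

theorem commute_star_mul_of_conj_eq (hu : u ∈ unitary R) (hv : v ∈ unitary R)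
    (h : u * a * star u = v * a * star v) : Commute (star v * u) a := by
  calc star v * u * a = star v * (u * a * star u) * u := by
        simp [mul_assoc, Unitary.star_mul_self_of_mem hu]
    _ = star v * (v * a * star v) * u := by rw [h]
    _ = a * (star v * u) := by
        simp [← mul_assoc, Unitary.star_mul_self_of_mem hv]

end Unitary

/-- The logarithmic derivative of `G⁻¹ F` is `F⁻¹ F' - (G⁻¹ F)⁻¹ (G⁻¹ G') (G⁻¹ F)` for unitary `G`;
`hG'` is the derivative of `G G⁻¹ = 1`. -/
theorem star_mul_logDeriv_star_mul {R : Type*} [Ring R] [StarMul R] {F G F' G' : R}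
    (hG : G * star G = 1) (hG' : G' * star G + G * star G' = 0) :
    star (star G * F) * (star G' * F + star G * F') =
      star F * F' - star (star G * F) * (star G * G') * (star G * F) := by
  have hG'' : G * star G' = -(G' * star G) := eq_neg_of_add_eq_zero_right hG'
  calc star (star G * F) * (star G' * F + star G * F')
      = star F * (G * star G') * F + star F * (G * star G) * F' := by
        simp only [star_mul, star_star, mul_add, mul_assoc]
    _ = star F * F' - star F * (G * star G) * G' * star G * F := by
        rw [hG'', hG]; noncomm_ring
    _ = _ := by simp only [star_mul, star_star, mul_assoc]

section UnitaryCurve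

variable {m : Type*} [Fintype m] [DecidableEq m] {u : ℝ → Matrix m m ℂ} {u' : Matrix m m ℂ}
  {x : ℝ}

theorem HasDerivAt.star_mul_add_star_mul_eq_zero (hU : ∀ t, u t ∈ unitaryGroup m ℂ)
    (hu : HasDerivAt u u' x) : star u' * u x + star (u x) * u' = 0 := by
  have h := hu.star.matrix_mul_s5 hu
  simp only [fun t => Unitary.star_mul_self_of_mem (hU t)] at h
  exact h.unique (hasDerivAt_const x 1)

theorem HasDerivAt.mul_star_add_mul_star_eq_zero (hU : ∀ t, u t ∈ unitaryGroup m ℂ)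
    (hu : HasDerivAt u u' x) : u' * star (u x) + u x * star u' = 0 := by
  have h := hu.matrix_mul_s5 hu.star
  simp only [fun t => Unitary.mul_star_self_of_mem (hU t)] at h
  exact h.unique (hasDerivAt_const x 1)

theorem HasDerivAt.conjTranspose_star_mul (hU : ∀ t, u t ∈ unitaryGroup m ℂ)
    (hu : HasDerivAt u u' x) : (star (u x) * u')ᴴ = -(star (u x) * u') := by
  rw [← star_eq_conjTranspose, star_mul, star_star]
  exact eq_neg_of_add_eq_zero_left (hu.star_mul_add_star_mul_eq_zero hU)

end UnitaryCurve

section Centralizer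

variable {n : ℕ} {a u w y z : Matrix (Fin n) (Fin n) ℂ}

theorem conj_mem_uCent (hu : u ∈ unitaryGroup (Fin n) ℂ) (hua : Commute u a)
    (hz : z ∈ uCent n a) : u * z * star u ∈ uCent n a := by
  refine ⟨?_, ?_⟩
  · simp [mul_assoc, star_eq_conjTranspose, hz.1]
  · exact (hua.mul_left hz.2).mul_left (hua.star_left_of_mem_unitary hu)

theorem star_conj_mem_uPerp (hu : u ∈ unitaryGroup (Fin n) ℂ) (hua : Commute u a)
    (hw : w ∈ uPerp n a) : star u * w * u ∈ uPerp n a := by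
  refine ⟨?_, fun z hz => ?_⟩
  · simp [mul_assoc, star_eq_conjTranspose, hw.1]
  · rw [mul_assoc (star u * w), trace_mul_cycle, trace_mul_comm]
    exact hw.2 _ (conj_mem_uCent hu hua hz)

theorem sub_mem_uPerp (hw : w ∈ uPerp n a) (hy : y ∈ uPerp n a) : w - y ∈ uPerp n a :=
  ⟨by rw [conjTranspose_sub, hw.1, hy.1, neg_sub_neg, neg_sub],
   fun z hz => by rw [sub_mul, trace_sub, neg_sub, ← neg_sub_neg, hw.2 z hz, hy.2 z hz, sub_zero]⟩

open scoped ComplexOrder in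
theorem eq_zero_of_mem_uCent_of_mem_uPerp (hc : y ∈ uCent n a) (hp : y ∈ uPerp n a) :
    y = 0 := by
  rw [← trace_conjTranspose_mul_self_eq_zero_iff, hp.1, neg_mul, trace_neg]
  exact hp.2 y hc

end Centralizer

section Development

variable {n : ℕ} {a : Matrix (Fin n) (Fin n) ℂ} {f g : ℝ → Matrix (Fin n) (Fin n) ℂ}
  {f' g' : Matrix (Fin n) (Fin n) ℂ} {x : ℝ}

theorem HasDerivAt.star_mul_mem_uCent (hU : ∀ t, f t ∈ unitaryGroup (Fin n) ℂ)
    (hcomm : ∀ t, Commute (f t) a) (hf : HasDerivAt f f' x) : star (f x) * f' ∈ uCent n a :=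
  ⟨hf.conjTranspose_star_mul hU,
    ((hcomm x).star_left_of_mem_unitary (hU x)).mul_left (hf.commute_of_forall_commute hcomm)⟩

theorem hasDerivAt_star_mul_eq_zero_of_mem_uPerp (hfU : ∀ t, f t ∈ unitaryGroup (Fin n) ℂ)
    (hgU : ∀ t, g t ∈ unitaryGroup (Fin n) ℂ) (hcomm : ∀ t, Commute (star (g t) * f t) a)
    (hf : HasDerivAt f f' x) (hg : HasDerivAt g g' x)
    (hfperp : star (f x) * f' ∈ uPerp n a) (hgperp : star (g x) * g' ∈ uPerp n a) :
    HasDerivAt (fun t => star (g t) * f t) 0 x := by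
  set h := fun t => star (g t) * f t
  have hhU : ∀ t, h t ∈ unitaryGroup (Fin n) ℂ :=
    fun t => mul_mem (Unitary.star_mem (hgU t)) (hfU t)
  have hh : HasDerivAt h (star g' * f x + star (g x) * f') x := hg.star.matrix_mul_s5 hf
  have hcent := hh.star_mul_mem_uCent hhU hcomm
  have hperp : star (h x) * (star g' * f x + star (g x) * f') ∈ uPerp n a := by
    rw [star_mul_logDeriv_star_mul (Unitary.mul_star_self_of_mem (hgU x))
      (hg.mul_star_add_mul_star_eq_zero hgU)]
    exact sub_mem_uPerp hfperp (star_conj_mem_uPerp (hhU x) (hcomm x) hgperp)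
  convert hh
  rw [← one_mul (_ + _), ← Unitary.mul_star_self_of_mem (hhU x), mul_assoc,
    eq_zero_of_mem_uCent_of_mem_uPerp hcent hperp, mul_zero]

end Development

theorem stmt5_general (n : ℕ)
    (a : Matrix (Fin n) (Fin n) ℂ)
    (f g : ℝ → Matrix (Fin n) (Fin n) ℂ)
    (hf : ContDiff ℝ (⊤ : ℕ∞) f) (hg : ContDiff ℝ (⊤ : ℕ∞) g)
    (hfU : ∀ x, f x ∈ Matrix.unitaryGroup (Fin n) ℂ)
    (hgU : ∀ x, g x ∈ Matrix.unitaryGroup (Fin n) ℂ)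
    (horbit : ∀ x, f x * a * star (f x) = g x * a * star (g x))
    (hfperp : ∀ x, star (f x) * deriv f x ∈ uPerp n a)
    (hgperp : ∀ x, star (g x) * deriv g x ∈ uPerp n a)
    (hflim : Tendsto f atBot (nhds 1))
    (hglim : Tendsto g atBot (nhds 1)) :
    f = g := by
  have hfd x : HasDerivAt f (deriv f x) x := (hf.differentiable (by simp) x).hasDerivAt
  have hgd x : HasDerivAt g (deriv g x) x := (hg.differentiable (by simp) x).hasDerivAt
  have hderiv x : HasDerivAt (fun t => star (g t) * f t) 0 x :=
    hasDerivAt_star_mul_eq_zero_of_mem_uPerp hfU hgU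
      (fun t => commute_star_mul_of_conj_eq (hfU t) (hgU t) (horbit t)) (hfd x) (hgd x)
      (hfperp x) (hgperp x)
  have hconst := is_const_of_deriv_eq_zero (fun x => (hderiv x).differentiableAt)
    (fun x => (hderiv x).deriv)
  have hlim : Tendsto (fun t => star (g t) * f t) atBot (nhds 1) := by
    simpa using hglim.star.mul hflim
  have hone x : star (g x) * f x = 1 :=
    tendsto_nhds_unique (tendsto_const_nhds.congr (hconst x)) hlim
  funext x
  rw [← one_mul (f x), ← Unitary.mul_star_self_of_mem (hgU x), mul_assoc, hone x, mul_one]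

/-- Injectivity of the development correspondence: if `a ∈ u(n)` is diagonal,
`f, g : ℝ → U(n)` are smooth with `f a f⁻¹ = g a g⁻¹`, `f⁻¹f_x` and `g⁻¹g_x` taking values in
`u(n)_a^⊥`, and `f, g → I` as `x → −∞`, then `f = g`. -/
theorem stmt5 (n : ℕ)
    (a : Matrix (Fin n) (Fin n) ℂ) (haDiag : a.IsDiag) (haSkew : aᴴ = -a)
    (f g : ℝ → Matrix (Fin n) (Fin n) ℂ)
    (hf : ContDiff ℝ (⊤ : ℕ∞) f) (hg : ContDiff ℝ (⊤ : ℕ∞) g)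
    (hfU : ∀ x, f x ∈ Matrix.unitaryGroup (Fin n) ℂ)
    (hgU : ∀ x, g x ∈ Matrix.unitaryGroup (Fin n) ℂ)
    (horbit : ∀ x, f x * a * star (f x) = g x * a * star (g x))
    (hfperp : ∀ x, star (f x) * deriv f x ∈ uPerp n a)
    (hgperp : ∀ x, star (g x) * deriv g x ∈ uPerp n a)
    (hflim : Tendsto f atBot (nhds 1))
    (hglim : Tendsto g atBot (nhds 1)) :
    f = g :=
  stmt5_general n a f g hf hg hfU hgU horbit hfperp hgperp hflim hglim
end

section
/- (Normalized gauge for loops into an adjoint orbit.) Let a ∈ u(n) be a fixed diagonal matrix and let f : ℝ → U(n) be a smooth map such that f⁻¹f_x is of Schwartz class and f(x) → I as x → −∞. Then there exists a smooth g : ℝ → U(n) such that g(x) a g(x)⁻¹ = f(x) a f(x)⁻¹ for all x, g⁻¹g_x(x) ∈ u(n)_a^⊥ for all x, and g(x) → I as x → −∞. -/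
open Matrix Filter

attribute [local instance] Matrix.normedAddCommGroup Matrix.normedSpace

open MeasureTheory Set intervalIntegral

set_option linter.unusedSectionVars false
set_option linter.unusedVariables false

open Matrix Filter MeasureTheory Set intervalIntegral

attribute [local instance] Matrix.normedAddCommGroup Matrix.normedSpace

noncomputable instance matContinuousENorm {m : ℕ} : ContinuousENorm (Matrix (Fin m) (Fin m) ℂ) :=
  SeminormedAddGroup.toContinuousENorm

instance matPseudoMetrizable {m : ℕ} :
    TopologicalSpace.PseudoMetrizableSpace (Matrix (Fin m) (Fin m) ℂ) :=
  inferInstanceAs (TopologicalSpace.PseudoMetrizableSpace (Fin m → Fin m → ℂ))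

section Primitives

variable {E : Type*} [NormedAddCommGroup E] [NormedSpace ℝ E] [CompleteSpace E]

lemma hasDerivAt_primitive_Iic (ψ : ℝ → E) (hc : Continuous ψ) (hi : Integrable ψ) (x : ℝ) :
    HasDerivAt (fun y => ∫ t in Iic y, ψ t) (ψ x) x := by
  have key : ∀ y : ℝ, ∫ t in Iic y, ψ t = (∫ t in Iic 0, ψ t) + ∫ t in (0:ℝ)..y, ψ t := by
    intro y
    have h := integral_Iic_sub_Iic (hi.integrableOn) (hi.integrableOn) (a := (0:ℝ)) (b := y)
    rw [← h]; abel
  have : HasDerivAt (fun y => (∫ t in Iic 0, ψ t) + ∫ t in (0:ℝ)..y, ψ t) (ψ x) x := by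
    refine HasDerivAt.const_add _ ?_
    exact intervalIntegral.integral_hasDerivAt_right (hi.intervalIntegrable)
      hc.stronglyMeasurable.stronglyMeasurableAtFilter hc.continuousAt
  simpa only [← key] using this

lemma tendsto_primitive_Iic_atBot (ψ : ℝ → E) (hi : Integrable ψ) :
    Tendsto (fun x => ∫ t in Iic x, ψ t) atBot (nhds 0) := by
  have : ∀ x : ℝ, ∫ t in Iic x, ψ t = ∫ t, (Iic x).indicator ψ t := fun x =>
    (MeasureTheory.integral_indicator measurableSet_Iic).symm
  simp_rw [this]
  have h0 : (0 : E) = ∫ t, (0 : ℝ → E) t := by simp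
  rw [h0]
  refine tendsto_integral_filter_of_dominated_convergence (fun t => ‖ψ t‖) ?_ ?_ hi.norm ?_
  · exact Eventually.of_forall fun x => hi.aestronglyMeasurable.indicator measurableSet_Iic
  · exact Eventually.of_forall fun x => ae_of_all _ fun t => norm_indicator_le_norm_self ψ t
  · refine ae_of_all _ fun t => ?_
    refine tendsto_const_nhds.congr' ?_
    filter_upwards [eventually_lt_atBot t] with x hx
    simp [Set.indicator_of_notMem (by simpa using hx : t ∉ Iic x)]

end Primitives

section W

variable {E : Type*} [NormedAddCommGroup E] [NormedSpace ℝ E] [CompleteSpace E]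
variable {B : ℝ → E}

/-- running L¹ mass of `B` -/
noncomputable def wfun (B : ℝ → E) (x : ℝ) : ℝ := ∫ t in Iic x, ‖B t‖

lemma wfun_nonneg (x : ℝ) : 0 ≤ wfun B x :=
  integral_nonneg fun t => norm_nonneg _

lemma wfun_le (hBi : Integrable B) (x : ℝ) : wfun B x ≤ ∫ t, ‖B t‖ :=
  setIntegral_le_integral hBi.norm (ae_of_all _ fun t => norm_nonneg _)

lemma wfun_hasDerivAt (hBc : Continuous B) (hBi : Integrable B) (x : ℝ) : HasDerivAt (wfun B) ‖B x‖ x :=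
  hasDerivAt_primitive_Iic _ hBc.norm hBi.norm x

lemma wfun_continuous (hBc : Continuous B) (hBi : Integrable B) : Continuous (wfun B) := by
  exact Differentiable.continuous fun x => (wfun_hasDerivAt hBc hBi x).differentiableAt

lemma wfun_tendsto_atBot (hBi : Integrable B) : Tendsto (wfun B) atBot (nhds 0) :=
  tendsto_primitive_Iic_atBot _ hBi.norm

/-- the key iterated-integral identity -/
lemma integral_norm_mul_wfun_pow (hBc : Continuous B) (hBi : Integrable B) (k : ℕ) (x : ℝ) :
    ∫ t in Iic x, ‖B t‖ * wfun B t ^ k = wfun B x ^ (k + 1) / (k + 1) := by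
  set L : ℝ := ∫ t, ‖B t‖ with hL
  have hwc : Continuous (wfun B) := wfun_continuous hBc hBi
  have hic : Continuous fun t => ‖B t‖ * wfun B t ^ k := hBc.norm.mul (hwc.pow k)
  have hii : Integrable fun t => ‖B t‖ * wfun B t ^ k := by
    refine (hBi.norm.const_mul (L ^ k)).mono' hic.aestronglyMeasurable (ae_of_all _ fun t => ?_)
    have h1 : 0 ≤ wfun B t := wfun_nonneg t
    have h2 : wfun B t ≤ L := wfun_le hBi t
    have : ‖B t‖ * wfun B t ^ k ≤ ‖B t‖ * L ^ k := by
      refine mul_le_mul_of_nonneg_left (pow_le_pow_left₀ h1 h2 k) (norm_nonneg _)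
    calc ‖‖B t‖ * wfun B t ^ k‖ = ‖B t‖ * wfun B t ^ k := by
          rw [Real.norm_eq_abs, abs_of_nonneg (by positivity)]
      _ ≤ L ^ k * ‖B t‖ := by linarith
  set G : ℝ → ℝ := fun y => wfun B y ^ (k + 1) / (k + 1) - ∫ t in Iic y, ‖B t‖ * wfun B t ^ k
    with hG
  have hGd : ∀ y, HasDerivAt G 0 y := by
    intro y
    have h1 : HasDerivAt (fun y => wfun B y ^ (k + 1) / (k + 1))
        ((k + 1) * wfun B y ^ k * ‖B y‖ / (k + 1)) y :=
      (((wfun_hasDerivAt hBc hBi y).pow (k + 1)).div_const _).congr_deriv (by push_cast; ring)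
    have h2 : HasDerivAt (fun y => ∫ t in Iic y, ‖B t‖ * wfun B t ^ k)
        (‖B y‖ * wfun B y ^ k) y := hasDerivAt_primitive_Iic _ hic hii y
    have := h1.sub h2
    have e : (k + 1) * wfun B y ^ k * ‖B y‖ / (k + 1) - ‖B y‖ * wfun B y ^ k = (0:ℝ) := by
      rw [mul_assoc, mul_div_cancel_left₀ _ (by positivity : ((k:ℝ) + 1) ≠ 0)]
      ring
    rw [e] at this
    exact this
  have hGconst : ∀ y z : ℝ, G y = G z :=
    is_const_of_deriv_eq_zero (fun y => (hGd y).differentiableAt)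
      (fun y => (hGd y).deriv)
  have hG0 : Tendsto G atBot (nhds 0) := by
    have t1 : Tendsto (fun y => wfun B y ^ (k + 1) / (k + 1)) atBot (nhds 0) := by
      have := ((wfun_tendsto_atBot hBi).pow (k + 1)).div_const ((k : ℝ) + 1)
      simpa using this
    have t2 := tendsto_primitive_Iic_atBot (fun t => ‖B t‖ * wfun B t ^ k) hii
    simpa using t1.sub t2
  have : G x = 0 := by
    have : Tendsto G atBot (nhds (G x)) := by
      refine Tendsto.congr (fun y => (hGconst x y)) tendsto_const_nhds
    exact tendsto_nhds_unique this hG0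
  have := sub_eq_zero.mp this
  linarith [this]

end W

namespace Stmt6Aux

noncomputable section

abbrev Mat (n : ℕ) := Matrix (Fin n) (Fin n) ℂ

lemma norm_mul_le_mat {n : ℕ} (A B : Mat n) : ‖A * B‖ ≤ n * ‖A‖ * ‖B‖ := by
  rw [Matrix.norm_le_iff (by positivity)]
  intro i j
  simp only [Matrix.mul_apply]
  calc ‖∑ k, A i k * B k j‖ ≤ ∑ k : Fin n, ‖A i k * B k j‖ := norm_sum_le _ _
    _ ≤ ∑ k : Fin n, ‖A‖ * ‖B‖ := by
        refine Finset.sum_le_sum fun k _ => ?_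
        rw [norm_mul]
        exact mul_le_mul (Matrix.norm_entry_le_entrywise_sup_norm A)
          (Matrix.norm_entry_le_entrywise_sup_norm B) (norm_nonneg _) (norm_nonneg _)
    _ = n * ‖A‖ * ‖B‖ := by simp [Finset.sum_const, mul_assoc]

/-- Matrix multiplication as a continuous ℝ-bilinear map (w.r.t. the entrywise sup norm). -/
def mulL (n : ℕ) : Mat n →L[ℝ] Mat n →L[ℝ] Mat n :=
  LinearMap.mkContinuous₂ (LinearMap.mul ℝ (Mat n)) n fun A B => norm_mul_le_mat A B

@[simp] lemma mulL_apply {n : ℕ} (A B : Mat n) : mulL n A B = A * B := rfl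

/-- Conjugate transpose as a continuous ℝ-linear map. -/
def starL (n : ℕ) : Mat n →L[ℝ] Mat n :=
  LinearMap.mkContinuous
    { toFun := fun A => Aᴴ
      map_add' := fun A B => Matrix.conjTranspose_add A B
      map_smul' := fun r A => by
        ext i j
        simp [Matrix.conjTranspose_apply, star_smul] }
    1 (by
      intro A
      rw [one_mul, Matrix.norm_le_iff (norm_nonneg _)]
      intro i j
      simpa [Matrix.conjTranspose_apply] using
        Matrix.norm_entry_le_entrywise_sup_norm A (i := j) (j := i))

@[simp] lemma starL_apply {n : ℕ} (A : Mat n) : starL n A = Aᴴ := rfl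

variable {n : ℕ} {B : ℝ → Mat n}

lemma integrable_mul (hBc : Continuous B) (hBi : Integrable B) {h : ℝ → Mat n}
    (hhc : Continuous h) {C : ℝ} (hh : ∀ t, ‖h t‖ ≤ C) :
    Integrable (fun t => B t * h t) := by
  refine ((hBi.norm.const_mul (n * C)).mono' ?_ (ae_of_all _ fun t => ?_))
  · exact (hBc.matrix_mul hhc).aestronglyMeasurable
  · calc ‖B t * h t‖ ≤ n * ‖B t‖ * ‖h t‖ := norm_mul_le_mat _ _
      _ ≤ n * ‖B t‖ * C := by
          refine mul_le_mul_of_nonneg_left (hh t) (by positivity)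
      _ = n * C * ‖B t‖ := by ring

/-- The key Grönwall-type bound for one step of the Picard iteration. -/
lemma key_bound (hBc : Continuous B) (hBi : Integrable B)
    {u : ℝ → Mat n} (huc : Continuous u) {c : ℝ} (hc : 0 ≤ c) {k : ℕ}
    (hu : ∀ t, ‖u t‖ ≤ c * (n * wfun B t) ^ k / (Nat.factorial k)) (x : ℝ) :
    ‖∫ t in Iic x, B t * u t‖ ≤ c * (n * wfun B x) ^ (k+1) / (Nat.factorial (k+1)) := by
  set L : ℝ := ∫ t, ‖B t‖ with hL
  have hL0 : 0 ≤ L := integral_nonneg fun t => norm_nonneg _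
  have hw0 : ∀ t, 0 ≤ wfun B t := fun t => wfun_nonneg t
  have hfk : (0:ℝ) < (Nat.factorial k : ℝ) := by exact_mod_cast Nat.factorial_pos k
  have hubd : ∀ t, ‖u t‖ ≤ c * (n * L) ^ k / (Nat.factorial k) := by
    intro t
    refine (hu t).trans ?_
    have h1 : ((n:ℝ) * wfun B t) ^ k ≤ ((n:ℝ) * L) ^ k :=
      pow_le_pow_left₀ (mul_nonneg (by positivity) (hw0 t))
        (mul_le_mul_of_nonneg_left (wfun_le hBi t) (by positivity)) k
    exact div_le_div_of_nonneg_right (mul_le_mul_of_nonneg_left h1 hc) hfk.le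
  have hint : Integrable (fun t => B t * u t) :=
    integrable_mul hBc hBi huc hubd
  have hwic : Continuous fun t => ‖B t‖ * wfun B t ^ k :=
    hBc.norm.mul ((wfun_continuous hBc hBi).pow k)
  have hwii : Integrable fun t => ‖B t‖ * wfun B t ^ k := by
    refine (hBi.norm.const_mul (L ^ k)).mono' hwic.aestronglyMeasurable (ae_of_all _ fun t => ?_)
    have h2 : wfun B t ≤ L := wfun_le hBi t
    calc ‖‖B t‖ * wfun B t ^ k‖ = ‖B t‖ * wfun B t ^ k := by
          rw [Real.norm_eq_abs, abs_of_nonneg (mul_nonneg (norm_nonneg _) (pow_nonneg (hw0 t) k))]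
      _ ≤ ‖B t‖ * L ^ k := mul_le_mul_of_nonneg_left (pow_le_pow_left₀ (hw0 t) h2 k) (norm_nonneg _)
      _ = L ^ k * ‖B t‖ := by ring
  calc ‖∫ t in Iic x, B t * u t‖ ≤ ∫ t in Iic x, ‖B t * u t‖ :=
        norm_integral_le_integral_norm _
    _ ≤ ∫ t in Iic x, (c * n ^ (k+1) / Nat.factorial k) * (‖B t‖ * wfun B t ^ k) := by
        refine setIntegral_mono hint.norm.integrableOn
          ((hwii.const_mul _).integrableOn) fun t => ?_
        calc ‖B t * u t‖ ≤ n * ‖B t‖ * ‖u t‖ := norm_mul_le_mat _ _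
          _ ≤ n * ‖B t‖ * (c * (n * wfun B t) ^ k / Nat.factorial k) :=
              mul_le_mul_of_nonneg_left (hu t) (by positivity)
          _ = (c * n ^ (k+1) / Nat.factorial k) * (‖B t‖ * wfun B t ^ k) := by
              rw [mul_pow]; field_simp; ring
    _ = (c * n ^ (k+1) / Nat.factorial k) * ∫ t in Iic x, ‖B t‖ * wfun B t ^ k :=
        integral_const_mul _ _
    _ = (c * n ^ (k+1) / Nat.factorial k) * (wfun B x ^ (k+1) / (k+1)) := by
        rw [integral_norm_mul_wfun_pow hBc hBi k x]
    _ = c * (n * wfun B x) ^ (k+1) / (Nat.factorial (k+1)) := by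
        rw [mul_pow, Nat.factorial_succ]
        push_cast
        field_simp

lemma picard_zero (hBc : Continuous B) (hBi : Integrable B)
    {k : ℝ → Mat n} (hkc : Continuous k) {C : ℝ} (hk : ∀ x, ‖k x‖ ≤ C)
    (hfix : ∀ x, k x = ∫ t in Iic x, B t * k t) : ∀ x, k x = 0 := by
  set L : ℝ := ∫ t, ‖B t‖ with hL
  have hL0 : 0 ≤ L := integral_nonneg fun t => norm_nonneg _
  set c : ℝ := max C 0 with hc
  have hc0 : 0 ≤ c := le_max_right _ _
  have key : ∀ j : ℕ, ∀ x, ‖k x‖ ≤ c * (n * wfun B x) ^ j / (Nat.factorial j) := by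
    intro j
    induction j with
    | zero =>
      intro x
      have : ‖k x‖ ≤ c := (hk x).trans (le_max_left C 0)
      simpa using this
    | succ j ih =>
      intro x
      rw [hfix x]
      exact key_bound hBc hBi hkc hc0 ih x
  intro x
  rw [← norm_le_zero_iff]
  have hseq : Tendsto (fun j : ℕ => c * (n * L) ^ j / (Nat.factorial j)) atTop (nhds 0) := by
    have := (FloorSemiring.tendsto_pow_div_factorial_atTop (K := ℝ) (n * L)).const_mul c
    simpa [mul_div_assoc] using this
  refine ge_of_tendsto' hseq fun j => ?_
  refine (key j x).trans ?_
  have h1 : ((n:ℝ) * wfun B x) ^ j ≤ ((n:ℝ) * L) ^ j :=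
    pow_le_pow_left₀ (mul_nonneg (by positivity) (wfun_nonneg x))
      (mul_le_mul_of_nonneg_left (wfun_le hBi x) (by positivity)) j
  have hfj : (0:ℝ) < (Nat.factorial j : ℝ) := by exact_mod_cast Nat.factorial_pos j
  exact div_le_div_of_nonneg_right (mul_le_mul_of_nonneg_left h1 hc0) hfj.le

/-- The Picard map on bounded continuous functions. -/
def Tmap (hBc : Continuous B) (hBi : Integrable B)
    (h : BoundedContinuousFunction ℝ (Mat n)) : BoundedContinuousFunction ℝ (Mat n) :=
  BoundedContinuousFunction.ofNormedAddCommGroup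
    (fun x => 1 + ∫ t in Iic x, B t * h t)
    (by
      refine continuous_const.add ?_
      have hint : Integrable (fun t => B t * h t) :=
        integrable_mul hBc hBi h.continuous (fun t => h.norm_coe_le_norm t)
      have hcont : Continuous (fun t => B t * h t) := hBc.matrix_mul h.continuous
      exact Differentiable.continuous fun x =>
        (hasDerivAt_primitive_Iic _ hcont hint x).differentiableAt)
    (‖(1 : Mat n)‖ + n * ‖h‖ * (∫ t, ‖B t‖))
    (by
      intro x
      refine (norm_add_le _ _).trans (add_le_add_right ?_ _)
      have hint : Integrable (fun t => B t * h t) :=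
        integrable_mul hBc hBi h.continuous (fun t => h.norm_coe_le_norm t)
      calc ‖∫ t in Iic x, B t * h t‖ ≤ ∫ t in Iic x, ‖B t * h t‖ :=
            norm_integral_le_integral_norm _
        _ ≤ ∫ t in Iic x, (n * ‖h‖) * ‖B t‖ := by
            refine setIntegral_mono hint.norm.integrableOn
              ((hBi.norm.const_mul _).integrableOn) fun t => ?_
            calc ‖B t * h t‖ ≤ n * ‖B t‖ * ‖h t‖ := norm_mul_le_mat _ _
              _ ≤ n * ‖B t‖ * ‖h‖ :=
                  mul_le_mul_of_nonneg_left (h.norm_coe_le_norm t) (by positivity)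
              _ = (n * ‖h‖) * ‖B t‖ := by ring
        _ = (n * ‖h‖) * ∫ t in Iic x, ‖B t‖ := integral_const_mul _ _
        _ ≤ (n * ‖h‖) * ∫ t, ‖B t‖ :=
            mul_le_mul_of_nonneg_left (wfun_le hBi x) (by positivity)
        _ = n * ‖h‖ * ∫ t, ‖B t‖ := by ring)

@[simp] lemma Tmap_apply (hBc : Continuous B) (hBi : Integrable B)
    (h : BoundedContinuousFunction ℝ (Mat n)) (x : ℝ) :
    Tmap hBc hBi h x = 1 + ∫ t in Iic x, B t * h t := rfl

theorem exists_picard (hBc : Continuous B) (hBi : Integrable B) :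
    ∃ h : ℝ → Mat n, Continuous h ∧ (∃ C, ∀ x, ‖h x‖ ≤ C) ∧
      ∀ x, h x = 1 + ∫ t in Iic x, B t * h t := by
  set L : ℝ := ∫ t, ‖B t‖ with hL
  have hL0 : 0 ≤ L := integral_nonneg fun t => norm_nonneg _
  set T := Tmap hBc hBi with hT
  -- iterated difference bound
  have key : ∀ j : ℕ, ∀ h₁ h₂ : BoundedContinuousFunction ℝ (Mat n), ∀ x,
      ‖(T^[j] h₁) x - (T^[j] h₂) x‖ ≤ dist h₁ h₂ * (n * wfun B x) ^ j / Nat.factorial j := by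
    intro j
    induction j with
    | zero =>
      intro h₁ h₂ x
      simpa [dist_eq_norm] using BoundedContinuousFunction.dist_coe_le_dist (f := h₁) (g := h₂) x
    | succ j ih =>
      intro h₁ h₂ x
      rw [Function.iterate_succ_apply' T j h₁, Function.iterate_succ_apply' T j h₂]
      set u := T^[j] h₁ with hu
      set v := T^[j] h₂ with hv
      have hiu : Integrable (fun t => B t * u t) :=
        integrable_mul hBc hBi u.continuous (fun t => u.norm_coe_le_norm t)
      have hiv : Integrable (fun t => B t * v t) :=
        integrable_mul hBc hBi v.continuous (fun t => v.norm_coe_le_norm t)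
      have hdiff : (T u) x - (T v) x = ∫ t in Iic x, B t * (u t - v t) := by
        simp only [hT, Tmap_apply]
        rw [show (fun t => B t * (u t - v t)) = fun t => B t * u t - B t * v t from
          funext fun t => mul_sub _ _ _]
        rw [integral_sub hiu.integrableOn hiv.integrableOn]
        abel
      rw [hdiff]
      exact key_bound hBc hBi (u.continuous.sub v.continuous) dist_nonneg (fun t => ih h₁ h₂ t) x
  -- choose a contracting iterate
  obtain ⟨j, hj⟩ : ∃ j : ℕ, ((n : ℝ) * L) ^ j / Nat.factorial j < 1 := by
    have := (FloorSemiring.tendsto_pow_div_factorial_atTop (K := ℝ) (n * L)).eventually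
      (gt_mem_nhds (by norm_num : (0:ℝ) < 1))
    exact this.exists
  have hd0 : (0:ℝ) ≤ ((n : ℝ) * L) ^ j / Nat.factorial j := by positivity
  set K : NNReal := ⟨((n : ℝ) * L) ^ j / Nat.factorial j, hd0⟩ with hK
  have hlip : LipschitzWith K (T^[j]) := by
    refine LipschitzWith.of_dist_le_mul fun h₁ h₂ => ?_
    refine BoundedContinuousFunction.dist_le (by positivity) |>.mpr fun x => ?_
    rw [dist_eq_norm]
    refine (key j h₁ h₂ x).trans ?_
    have h1 : ((n:ℝ) * wfun B x) ^ j ≤ ((n:ℝ) * L) ^ j :=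
      pow_le_pow_left₀ (mul_nonneg (by positivity) (wfun_nonneg x))
        (mul_le_mul_of_nonneg_left (wfun_le hBi x) (by positivity)) j
    have hfj : (0:ℝ) < (Nat.factorial j : ℝ) := by exact_mod_cast Nat.factorial_pos j
    calc dist h₁ h₂ * (n * wfun B x) ^ j / Nat.factorial j
        ≤ dist h₁ h₂ * (n * L) ^ j / Nat.factorial j :=
          div_le_div_of_nonneg_right (mul_le_mul_of_nonneg_left h1 dist_nonneg) hfj.le
      _ = (K : ℝ) * dist h₁ h₂ := by
          rw [hK]
          show _ = ((n : ℝ) * L) ^ j / Nat.factorial j * dist h₁ h₂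
          ring
  have hcontr : ContractingWith K (T^[j]) := ⟨by exact_mod_cast hj, hlip⟩
  set y := hcontr.fixedPoint (T^[j]) with hy
  have hyfix : Function.IsFixedPt (T^[j]) y := hcontr.fixedPoint_isFixedPt
  have hTy : Function.IsFixedPt (T^[j]) (T y) := by
    show T^[j] (T y) = T y
    rw [← Function.iterate_succ_apply T j y, Function.iterate_succ_apply' T j y, hyfix]
  have hfixT : T y = y := (hcontr.fixedPoint_unique hTy).trans (hcontr.fixedPoint_unique hyfix).symm
  refine ⟨⇑y, y.continuous, ⟨‖y‖, fun x => y.norm_coe_le_norm x⟩, fun x => ?_⟩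
  conv_lhs => rw [← hfixT]
  simp [hT]

theorem picard_props (hBs : ContDiff ℝ (⊤:ℕ∞) B) (hBi : Integrable B)
    {h : ℝ → Mat n} (hhc : Continuous h) {C : ℝ} (hh : ∀ x, ‖h x‖ ≤ C)
    (heq : ∀ x, h x = 1 + ∫ t in Iic x, B t * h t) :
    (∀ x, HasDerivAt h (B x * h x) x) ∧ ContDiff ℝ (⊤:ℕ∞) h ∧ Tendsto h atBot (nhds 1) := by
  have hBc : Continuous B := hBs.continuous
  have hcont : Continuous (fun t => B t * h t) := hBc.matrix_mul hhc
  have hint : Integrable (fun t => B t * h t) := integrable_mul hBc hBi hhc hh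
  have hd : ∀ x, HasDerivAt h (B x * h x) x := by
    intro x
    have : HasDerivAt (fun y => 1 + ∫ t in Iic y, B t * h t) (B x * h x) x :=
      (hasDerivAt_primitive_Iic _ hcont hint x).const_add 1
    exact this.congr_of_eventuallyEq (Eventually.of_forall heq)
  have hderiv : deriv h = fun x => B x * h x := funext fun x => (hd x).deriv
  have hsmooth : ContDiff ℝ (⊤:ℕ∞) h := by
    rw [contDiff_infty]
    intro m
    induction m with
    | zero => exact contDiff_zero.mpr hhc
    | succ m ih =>
      have hcast : ((m + 1 : ℕ) : WithTop ℕ∞) = ((m : ℕ) : WithTop ℕ∞) + 1 := by norm_cast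
      rw [hcast, contDiff_succ_iff_deriv]
      refine ⟨fun x => (hd x).differentiableAt, ?_, ?_⟩
      · intro hω
        exact absurd hω (by simp)
      · erw [hderiv]
        have hbil : ContDiff ℝ ((m : ℕ) : WithTop ℕ∞) (fun p : Mat n × Mat n => mulL n p.1 p.2) :=
          (mulL n).isBoundedBilinearMap.contDiff.of_le le_top
        have hBm : ContDiff ℝ ((m : ℕ) : WithTop ℕ∞) B := hBs.of_le (by exact_mod_cast le_top)
        exact hbil.comp (hBm.prodMk ih)
  refine ⟨hd, hsmooth, ?_⟩
  have := (tendsto_primitive_Iic_atBot _ hint).const_add (1 : Mat n)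
  simp only [add_zero] at this
  exact this.congr fun x => (heq x).symm

lemma hasDerivAt_matMul {u v : ℝ → Mat n} {u' v' : Mat n} {x : ℝ}
    (hu : HasDerivAt u u' x) (hv : HasDerivAt v v' x) :
    HasDerivAt (fun y => u y * v y) (u' * v x + u x * v') x := by
  have := (ContinuousLinearMap.hasDerivWithinAt_of_bilinear (B := mulL n) (s := univ)
    (by exact hu.hasDerivWithinAt) (by exact hv.hasDerivWithinAt)).hasDerivAt univ_mem
  rw [add_comm] at this
  exact this

lemma hasDerivAt_matStar {u : ℝ → Mat n} {u' : Mat n} {x : ℝ} (hu : HasDerivAt u u' x) :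
    HasDerivAt (fun y => star (u y)) (star u') x := by
  have := (starL n).hasFDerivAt.comp_hasDerivAt x hu
  exact this

/-- Projection onto the centralizer of a diagonal matrix `a` (the "block-diagonal part"). -/
def projC (a : Mat n) : Mat n →L[ℝ] Mat n :=
  LinearMap.mkContinuous
    { toFun := fun m => Matrix.of fun i j => if a i i = a j j then m i j else 0
      map_add' := fun m₁ m₂ => by
        ext i j
        simp only [Matrix.of_apply, Matrix.add_apply]
        split_ifs <;> simp
      map_smul' := fun r m => by
        ext i j
        simp only [Matrix.of_apply, Matrix.smul_apply, RingHom.id_apply]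
        split_ifs <;> simp }
    1 (by
      intro m
      rw [one_mul, Matrix.norm_le_iff (norm_nonneg _)]
      intro i j
      simp only [LinearMap.coe_mk, AddHom.coe_mk, Matrix.of_apply]
      split_ifs
      · exact Matrix.norm_entry_le_entrywise_sup_norm m
      · simp [norm_nonneg])

lemma projC_apply (a m : Mat n) (i j : Fin n) :
    projC a m i j = if a i i = a j j then m i j else 0 := rfl

lemma norm_projC_le (a m : Mat n) : ‖projC a m‖ ≤ ‖m‖ := by
  rw [Matrix.norm_le_iff (norm_nonneg _)]
  intro i j
  rw [projC_apply]
  split_ifs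
  · exact Matrix.norm_entry_le_entrywise_sup_norm m
  · simp [norm_nonneg]

lemma mul_diag_apply {a : Mat n} (haDiag : a.IsDiag) (m : Mat n) (i j : Fin n) :
    (m * a) i j = m i j * a j j := by
  rw [Matrix.mul_apply]
  refine Finset.sum_eq_single j (fun k _ hk => ?_) (by simp)
  rw [haDiag hk, mul_zero]

lemma diag_mul_apply {a : Mat n} (haDiag : a.IsDiag) (m : Mat n) (i j : Fin n) :
    (a * m) i j = a i i * m i j := by
  rw [Matrix.mul_apply]
  refine Finset.sum_eq_single i (fun k _ hk => ?_) (by simp)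
  rw [haDiag (Ne.symm hk), zero_mul]

lemma projC_mul_comm {a : Mat n} (haDiag : a.IsDiag) (m : Mat n) :
    projC a m * a = a * projC a m := by
  ext i j
  rw [mul_diag_apply haDiag, diag_mul_apply haDiag, projC_apply]
  split_ifs with hij
  · rw [hij, mul_comm]
  · simp

lemma projC_conjT (a m : Mat n) (haSkew : aᴴ = -a) : (projC a m)ᴴ = projC a mᴴ := by
  ext i j
  rw [Matrix.conjTranspose_apply, projC_apply, projC_apply, Matrix.conjTranspose_apply]
  by_cases hij : a i i = a j j
  · rw [if_pos hij, if_pos hij.symm]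
  · rw [if_neg hij, if_neg (fun h => hij h.symm), star_zero]

lemma commute_entry {a : Mat n} (haDiag : a.IsDiag) {w : Mat n} (hw : w * a = a * w)
    {i j : Fin n} (hij : a i i ≠ a j j) : w i j = 0 := by
  have h1 : (w * a) i j = (a * w) i j := by rw [hw]
  rw [mul_diag_apply haDiag, diag_mul_apply haDiag] at h1
  have h2 : w i j * (a j j - a i i) = 0 := by ring_nf; linear_combination h1
  rcases mul_eq_zero.mp h2 with h | h
  · exact h
  · exact absurd (by linear_combination -h : a i i = a j j) hij

lemma trace_perp {a : Mat n} (haDiag : a.IsDiag) {r w : Mat n}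
    (hr : ∀ i j, a i i = a j j → r i j = 0) (hw : w * a = a * w) :
    (r * w).trace = 0 := by
  rw [Matrix.trace]
  refine Finset.sum_eq_zero fun i _ => ?_
  rw [Matrix.diag_apply, Matrix.mul_apply]
  refine Finset.sum_eq_zero fun j _ => ?_
  by_cases hij : a i i = a j j
  · rw [hr i j hij, zero_mul]
  · rw [commute_entry haDiag hw (fun hji => hij hji.symm), mul_zero]

end
end Stmt6Aux

open Stmt6Aux

/-- A map of `ℝ` into a normed space is of Schwartz class if it is (the underlying function
of) a Schwartz map, i.e. it is smooth and it and all its derivatives decay faster than any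
polynomial. -/
def IsSchwartz {E : Type*} [NormedAddCommGroup E] [NormedSpace ℝ E] (f : ℝ → E) : Prop :=
  ∃ φ : SchwartzMap ℝ E, ⇑φ = f

/-- Normalized gauge for loops into an adjoint orbit: if `a ∈ u(n)` is diagonal
and `f : ℝ → U(n)` is smooth with `f⁻¹f_x` of Schwartz class and `f → I` as `x → −∞`, then
there is a smooth `g : ℝ → U(n)` with `g a g⁻¹ = f a f⁻¹`, `g⁻¹g_x` taking values in
`u(n)_a^⊥`, and `g → I` as `x → −∞`. -/
theorem stmt6 (n : ℕ)
    (a : Matrix (Fin n) (Fin n) ℂ) (haDiag : a.IsDiag) (haSkew : aᴴ = -a)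
    (f : ℝ → Matrix (Fin n) (Fin n) ℂ)
    (hf : ContDiff ℝ (⊤ : ℕ∞) f)
    (hfU : ∀ x, f x ∈ Matrix.unitaryGroup (Fin n) ℂ)
    (hfS : IsSchwartz (fun x => star (f x) * deriv f x))
    (hflim : Tendsto f atBot (nhds 1)) :
    ∃ g : ℝ → Matrix (Fin n) (Fin n) ℂ,
      ContDiff ℝ (⊤ : ℕ∞) g ∧
      (∀ x, g x ∈ Matrix.unitaryGroup (Fin n) ℂ) ∧
      (∀ x, g x * a * star (g x) = f x * a * star (f x)) ∧
      (∀ x, star (g x) * deriv g x ∈ uPerp n a) ∧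
      Tendsto g atBot (nhds 1) := by
  obtain ⟨φ, hφ⟩ := hfS
  have hsx : ∀ x, φ x = star (f x) * deriv f x := fun x => congrFun hφ x
  -- the (negated, projected) connection coefficient
  set B : ℝ → Mat n := fun x => -(projC a (φ x)) with hB
  have hBs : ContDiff ℝ (⊤ : ℕ∞) B := (((projC a).contDiff).comp (φ.smooth ⊤)).neg
  have hBc : Continuous B := hBs.continuous
  have hBi : Integrable B := by
    refine (φ.integrable (μ := volume)).norm.mono' hBc.aestronglyMeasurable
      (ae_of_all _ fun t => ?_)
    rw [hB]
    simp only [norm_neg, Real.norm_eq_abs, abs_norm]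
    exact norm_projC_le a (φ t)
  -- solve the ODE h' = B h, h(-∞) = 1
  obtain ⟨h, hhc, ⟨C, hhC⟩, heq⟩ := exists_picard hBc hBi
  obtain ⟨hd, hsm, hlim⟩ := picard_props hBs hBi hhc hhC heq
  -- unitarity facts for f
  have hfU1 : ∀ x, star (f x) * f x = 1 := fun x => Matrix.mem_unitaryGroup_iff'.mp (hfU x)
  have hfU2 : ∀ x, f x * star (f x) = 1 := fun x => Matrix.mem_unitaryGroup_iff.mp (hfU x)
  have hfd : ∀ x, HasDerivAt f (deriv f x) x := fun x =>
    ((hf.differentiable (by simp)) x).hasDerivAt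
  -- skew-symmetry of the connection coefficient s = f⁻¹ f'
  have hskew : ∀ x, (φ x)ᴴ = -φ x := by
    intro x
    have h1 : HasDerivAt (fun y => star (f y) * f y)
        (star (deriv f x) * f x + star (f x) * deriv f x) x :=
      hasDerivAt_matMul (hasDerivAt_matStar (hfd x)) (hfd x)
    have h2 : HasDerivAt (fun y => star (f y) * f y) 0 x := by
      have e : (fun y => star (f y) * f y) = fun _ => (1 : Mat n) := funext fun y => hfU1 y
      rw [e]; exact hasDerivAt_const x 1
    have h3 := h1.unique h2
    have h4 : star (deriv f x) * f x = -(star (f x) * deriv f x) :=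
      eq_neg_of_add_eq_zero_left h3
    calc (φ x)ᴴ = star (deriv f x) * f x := by
          rw [hsx x, Matrix.conjTranspose_mul, Matrix.star_eq_conjTranspose,
            Matrix.conjTranspose_conjTranspose, ← Matrix.star_eq_conjTranspose]
      _ = -φ x := by rw [h4, hsx x]
  have hBskew : ∀ x, (B x)ᴴ = -B x := by
    intro x
    rw [hB]
    simp only [Matrix.conjTranspose_neg]
    rw [projC_conjT a (φ x) haSkew, hskew x, map_neg, neg_neg]
  have hBa : ∀ t, B t * a = a * B t := by
    intro t
    rw [hB]
    simp only [neg_mul, mul_neg]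
    rw [projC_mul_comm haDiag (φ t)]
  -- h is unitary
  have hp : ∀ x, star (h x) * h x = 1 := by
    have hder : ∀ x, HasDerivAt (fun y => star (h y) * h y) 0 x := by
      intro x
      have h1 := hasDerivAt_matMul (hasDerivAt_matStar (hd x)) (hd x)
      convert h1 using 1
      have e1 : star (B x * h x) = star (h x) * (-(B x)) := by
        rw [Matrix.star_mul]
        congr 1
        rw [Matrix.star_eq_conjTranspose, hBskew x]
      rw [e1]
      noncomm_ring
    have hconst := is_const_of_deriv_eq_zero
      (fun x => (hder x).differentiableAt) (fun x => (hder x).deriv)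
    have hqs : Continuous fun A : Mat n => star A := by
      have := (starL n).continuous
      exact this
    have hq : Continuous fun A : Mat n => star A * A := hqs.matrix_mul continuous_id
    have hptend : Tendsto (fun x => star (h x) * h x) atBot (nhds 1) := by
      have := (hq.tendsto 1).comp hlim
      rw [star_one, one_mul] at this
      exact this
    intro x
    exact tendsto_nhds_unique (tendsto_const_nhds.congr fun y => hconst x y) hptend
  have hp' : ∀ x, h x * star (h x) = 1 := fun x => mul_eq_one_comm.mp (hp x)
  -- h commutes with a
  have hint : Integrable (fun t => B t * h t) := integrable_mul hBc hBi hhc hhC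
  have hcomm : ∀ x, h x * a = a * h x := by
    set k : ℝ → Mat n := fun x => h x * a - a * h x with hk
    have hkc : Continuous k :=
      (hhc.matrix_mul continuous_const).sub (continuous_const.matrix_mul hhc)
    have hkfix : ∀ x, k x = ∫ t in Iic x, B t * k t := by
      intro x
      have hio : IntegrableOn (fun t => B t * h t) (Iic x) volume := hint.integrableOn
      have e1 : (∫ t in Iic x, B t * h t) * a = ∫ t in Iic x, B t * h t * a := by
        have := ((mulL n).flip a).integral_comp_comm hio
        exact this.symm
      have e2 : a * (∫ t in Iic x, B t * h t) = ∫ t in Iic x, a * (B t * h t) := by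
        have := (mulL n a).integral_comp_comm hio
        exact this.symm
      have e3 : ∀ t, B t * h t * a - a * (B t * h t) = B t * k t := by
        intro t
        have : a * (B t * h t) = B t * (a * h t) := by
          rw [← Matrix.mul_assoc, ← hBa t, Matrix.mul_assoc]
        rw [this, hk]
        simp only [Matrix.mul_sub, Matrix.mul_assoc]
      have hia : Integrable (fun t => B t * h t * a) := by
        have := ((mulL n).flip a).integrable_comp hint
        exact this
      have hib : Integrable (fun t => a * (B t * h t)) := by
        have := (mulL n a).integrable_comp hint
        exact this
      calc k x = (1 + ∫ t in Iic x, B t * h t) * a - a * (1 + ∫ t in Iic x, B t * h t) := by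
            rw [hk]; simp only [heq x]
        _ = (∫ t in Iic x, B t * h t) * a - a * (∫ t in Iic x, B t * h t) := by
            noncomm_ring
        _ = ∫ t in Iic x, (B t * h t * a - a * (B t * h t)) := by
            rw [e1, e2, integral_sub hia.integrableOn hib.integrableOn]
        _ = ∫ t in Iic x, B t * k t := by
            congr 1; exact funext fun t => e3 t
    have hkbdd : ∀ x, ‖k x‖ ≤ n * C * ‖a‖ + n * ‖a‖ * C := by
      intro x
      have hC0 : (0:ℝ) ≤ C := le_trans (norm_nonneg _) (hhC x)
      calc ‖k x‖ ≤ ‖h x * a‖ + ‖a * h x‖ := norm_sub_le _ _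
        _ ≤ n * ‖h x‖ * ‖a‖ + n * ‖a‖ * ‖h x‖ :=
            add_le_add (norm_mul_le_mat _ _) (norm_mul_le_mat _ _)
        _ ≤ n * C * ‖a‖ + n * ‖a‖ * C := by
            have h1 : (n:ℝ) * ‖h x‖ * ‖a‖ ≤ n * C * ‖a‖ := by
              have := mul_le_mul_of_nonneg_right (mul_le_mul_of_nonneg_left (hhC x)
                (by positivity : (0:ℝ) ≤ (n:ℝ))) (norm_nonneg a)
              linarith
            have h2 : (n:ℝ) * ‖a‖ * ‖h x‖ ≤ n * ‖a‖ * C := by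
              have := mul_le_mul_of_nonneg_left (hhC x)
                (by positivity : (0:ℝ) ≤ (n:ℝ) * ‖a‖)
              linarith [this]
            linarith
    intro x
    have := picard_zero hBc hBi hkc hkbdd hkfix x
    rw [hk] at this
    exact sub_eq_zero.mp this
  have hcomm' : ∀ x, star (h x) * a = a * star (h x) := by
    intro x
    have h1 := congrArg Matrix.conjTranspose (hcomm x)
    rw [Matrix.conjTranspose_mul, Matrix.conjTranspose_mul, haSkew] at h1
    simp only [neg_mul, mul_neg, neg_inj] at h1
    rw [Matrix.star_eq_conjTranspose]
    exact h1.symm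
  -- the gauge-transformed map
  set g : ℝ → Mat n := fun x => f x * h x with hg
  have hgc : ContDiff ℝ (⊤ : ℕ∞) g := by
    have hbil : ContDiff ℝ ((⊤:ℕ∞) : WithTop ℕ∞) (fun p : Mat n × Mat n => mulL n p.1 p.2) :=
      (mulL n).isBoundedBilinearMap.contDiff.of_le le_top
    have := hbil.comp (hf.prodMk hsm)
    exact this
  have hgU : ∀ x, g x ∈ Matrix.unitaryGroup (Fin n) ℂ := by
    intro x
    rw [Matrix.mem_unitaryGroup_iff']
    rw [hg]
    calc star (f x * h x) * (f x * h x)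
        = star (h x) * (star (f x) * f x) * h x := by
          rw [Matrix.star_mul]; noncomm_ring
      _ = 1 := by rw [hfU1 x, mul_one, hp x]
  have hgconj : ∀ x, g x * a * star (g x) = f x * a * star (f x) := by
    intro x
    rw [hg]
    calc f x * h x * a * star (f x * h x)
        = f x * (h x * a * star (h x)) * star (f x) := by
          rw [Matrix.star_mul]; noncomm_ring
      _ = f x * a * star (f x) := by
          rw [hcomm x, Matrix.mul_assoc a, hp' x, mul_one]
  have hgd : ∀ x, HasDerivAt g (deriv f x * h x + f x * (B x * h x)) x := fun x =>
    hasDerivAt_matMul (hfd x) (hd x)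
  have hgauge : ∀ x, star (g x) * deriv g x
      = star (h x) * ((φ x - projC a (φ x)) * h x) := by
    intro x
    erw [(hgd x).deriv, hg]
    calc star (f x * h x) * (deriv f x * h x + f x * (B x * h x))
        = star (h x) * ((star (f x) * deriv f x) * h x)
          + star (h x) * ((star (f x) * f x) * (B x * h x)) := by
          rw [Matrix.star_mul]; noncomm_ring
      _ = star (h x) * ((φ x - projC a (φ x)) * h x) := by
          rw [hfU1 x, one_mul, hB, ← hsx x]
          noncomm_ring
  -- membership in uPerp
  have hperp : ∀ x, star (g x) * deriv g x ∈ uPerp n a := by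
    intro x
    rw [hgauge x]
    set r : Mat n := φ x - projC a (φ x) with hr
    have hrskew : rᴴ = -r := by
      rw [hr, Matrix.conjTranspose_sub, hskew x, projC_conjT a (φ x) haSkew, hskew x, map_neg]
      abel
    have hrentry : ∀ i j, a i i = a j j → r i j = 0 := by
      intro i j hij
      rw [hr, Matrix.sub_apply, projC_apply, if_pos hij, sub_self]
    constructor
    · -- skew
      show (star (h x) * (r * h x))ᴴ = -(star (h x) * (r * h x))
      rw [Matrix.conjTranspose_mul, Matrix.conjTranspose_mul, hrskew,
        Matrix.star_eq_conjTranspose, Matrix.conjTranspose_conjTranspose]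
      noncomm_ring
    · -- orthogonality
      intro z hz
      obtain ⟨hzskew, hza⟩ := hz
      rw [neg_eq_zero]
      set w : Mat n := h x * (z * star (h x)) with hw
      have hwa : w * a = a * w := by
        rw [hw]
        calc h x * (z * star (h x)) * a = h x * (z * (star (h x) * a)) := by
              noncomm_ring
          _ = h x * (z * a) * star (h x) := by rw [hcomm' x]; noncomm_ring
          _ = h x * (a * z) * star (h x) := by rw [hza]
          _ = (h x * a) * (z * star (h x)) := by noncomm_ring
          _ = a * (h x * (z * star (h x))) := by rw [hcomm x]; noncomm_ring
      have e : ((star (h x) * (r * h x)) * z).trace = (r * w).trace := by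
        rw [Matrix.mul_assoc, Matrix.trace_mul_comm, hw]
        congr 1
        noncomm_ring
      rw [e]
      exact trace_perp haDiag hrentry hwa
  have hglim : Tendsto g atBot (nhds 1) := by
    have hmc : Continuous fun p : Mat n × Mat n => mulL n p.1 p.2 :=
      (mulL n).isBoundedBilinearMap.continuous
    have := (hmc.tendsto (1, 1)).comp (hflim.prodMk_nhds hlim)
    simp only [mulL_apply, mul_one] at this
    exact this
  exact ⟨g, hgc, hgU, hgconj, hperp, hglim⟩
end

section
/- (Lax pair for the KdV equation.) Let q : ℝ² → ℝ be smooth. Set a = diag(1, −1), u = [[0, q],[1, 0]], Q₂ = [[−q/2, −q_x/2],[0, q/2]], and Q₃ = [[q_x/4, (q_xx − 2q²)/4],[−q/2, −q_x/4]], all real 2×2 matrix-valued functions on ℝ². Then q satisfies the KdV equation q_t = (1/4)(q_xxx − 6 q q_x) if and only if for every λ ∈ ℝ the zero-curvature equation ∂_x(aλ³ + uλ² + Q₂λ + Q₃) − ∂_t(aλ + u) + [aλ + u, aλ³ + uλ² + Q₂λ + Q₃] = 0 holds identically in (x,t). -/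
open Matrix

attribute [local instance] Matrix.normedAddCommGroup Matrix.normedSpace

/-! The zero-curvature expression does not depend on `λ` at all: all powers of `λ` cancel and
it equals `!![0, (q_xxx - 6 q q_x) / 4 - q_t; 0, 0]`, so it vanishes for every (or any) `λ`
exactly when `q` solves KdV. -/

theorem Matrix.hasDerivAt_fin_two {𝕜 F : Type*} [NontriviallyNormedField 𝕜]
    [NormedAddCommGroup F] [NormedSpace 𝕜 F] {f₁₁ f₁₂ f₂₁ f₂₂ : 𝕜 → F} {f₁₁' f₁₂' f₂₁' f₂₂' : F}
    {x : 𝕜}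
    (h₁₁ : HasDerivAt f₁₁ f₁₁' x) (h₁₂ : HasDerivAt f₁₂ f₁₂' x)
    (h₂₁ : HasDerivAt f₂₁ f₂₁' x) (h₂₂ : HasDerivAt f₂₂ f₂₂' x) :
    HasDerivAt (fun y => !![f₁₁ y, f₁₂ y; f₂₁ y, f₂₂ y]) !![f₁₁', f₁₂'; f₂₁', f₂₂'] x := by
  refine hasDerivAt_pi.2 fun i => hasDerivAt_pi.2 fun j => ?_
  fin_cases i <;> fin_cases j <;> assumption

section PartialDerivatives

variable {F : Type*} [NormedAddCommGroup F] [NormedSpace ℝ F] {f : ℝ → ℝ → F}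

theorem DifferentiableAt.hasDerivAt_left {x t : ℝ}
    (hf : DifferentiableAt ℝ (fun p : ℝ × ℝ => f p.1 p.2) (x, t)) :
    HasDerivAt (fun y => f y t) (fderiv ℝ (fun p : ℝ × ℝ => f p.1 p.2) (x, t) (1, 0)) x :=
  hf.hasFDerivAt.comp_hasDerivAt (l := fun p : ℝ × ℝ => f p.1 p.2) x
    ((hasDerivAt_id x).prodMk (hasDerivAt_const x t))

theorem DifferentiableAt.hasDerivAt_right {x t : ℝ}
    (hf : DifferentiableAt ℝ (fun p : ℝ × ℝ => f p.1 p.2) (x, t)) :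
    HasDerivAt (fun s => f x s) (fderiv ℝ (fun p : ℝ × ℝ => f p.1 p.2) (x, t) (0, 1)) t :=
  hf.hasFDerivAt.comp_hasDerivAt (l := fun p : ℝ × ℝ => f p.1 p.2) t
    ((hasDerivAt_const t x).prodMk (hasDerivAt_id t))

variable {n : WithTop ℕ∞} {g : ℝ → ℝ → F}

theorem ContDiff.hasDerivAt_left (hf : ContDiff ℝ n fun p : ℝ × ℝ => f p.1 p.2) (hn : n ≠ 0)
    (hg : ∀ x t, g x t = deriv (fun y => f y t) x) (x t : ℝ) :
    HasDerivAt (fun y => f y t) (g x t) x := by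
  rw [hg]
  exact ((hf.differentiable hn _).hasDerivAt_left).differentiableAt.hasDerivAt

theorem ContDiff.hasDerivAt_right (hf : ContDiff ℝ n fun p : ℝ × ℝ => f p.1 p.2) (hn : n ≠ 0)
    (hg : ∀ x t, g x t = deriv (fun s => f x s) t) (x t : ℝ) :
    HasDerivAt (fun s => f x s) (g x t) t := by
  rw [hg]
  exact ((hf.differentiable hn _).hasDerivAt_right).differentiableAt.hasDerivAt

theorem ContDiff.of_eq_deriv_left (hf : ContDiff ℝ (n + 1) fun p : ℝ × ℝ => f p.1 p.2)
    (hg : ∀ x t, g x t = deriv (fun y => f y t) x) :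
    ContDiff ℝ n fun p : ℝ × ℝ => g p.1 p.2 := by
  have hg' : ∀ p : ℝ × ℝ, g p.1 p.2 = fderiv ℝ (fun p : ℝ × ℝ => f p.1 p.2) p (1, 0) := fun p =>
    (hg p.1 p.2).trans ((hf.differentiable (by simp) p).hasDerivAt_left).deriv
  simp_rw [hg']
  exact (hf.fderiv_right le_rfl).clm_apply contDiff_const

end PartialDerivatives

section KdVLaxPair

variable (lam : ℝ) {x : ℝ}

theorem deriv_kdv_lax_time (a : Matrix (Fin 2) (Fin 2) ℝ) {q : ℝ → ℝ} {qt : ℝ}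
    (hq : HasDerivAt q qt x) :
    deriv (fun s => lam • a + !![0, q s; 1, 0]) x = !![0, qt; 0, 0] :=
  ((hasDerivAt_const x _).add (Matrix.hasDerivAt_fin_two (hasDerivAt_const x 0) hq
    (hasDerivAt_const x 1) (hasDerivAt_const x 0))).deriv.trans (zero_add _)

theorem deriv_kdv_lax_space (a : Matrix (Fin 2) (Fin 2) ℝ) {q qx qxx : ℝ → ℝ} {qxxx : ℝ}
    (hq : HasDerivAt q (qx x) x) (hqx : HasDerivAt qx (qxx x) x) (hqxx : HasDerivAt qxx qxxx x) :
    deriv (fun y => lam ^ 3 • a + lam ^ 2 • !![0, q y; 1, 0]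
        + lam • !![-(q y) / 2, -(qx y) / 2; 0, q y / 2]
        + !![qx y / 4, (qxx y - 2 * q y ^ 2) / 4; -(q y) / 2, -(qx y) / 4]) x
      = (lam ^ 2 • !![0, qx x; 0, 0] + lam • !![-(qx x) / 2, -(qxx x) / 2; 0, qx x / 2]
        + !![qxx x / 4, (qxxx - 4 * q x * qx x) / 4; -(qx x) / 2, -(qxx x) / 4]) := by
  have hu : HasDerivAt (fun y => !![0, q y; 1, 0]) !![0, qx x; 0, 0] x :=
    Matrix.hasDerivAt_fin_two (hasDerivAt_const x 0) hq (hasDerivAt_const x 1)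
      (hasDerivAt_const x 0)
  have hQ₂ : HasDerivAt (fun y => !![-(q y) / 2, -(qx y) / 2; 0, q y / 2])
      !![-(qx x) / 2, -(qxx x) / 2; 0, qx x / 2] x :=
    Matrix.hasDerivAt_fin_two (hq.neg.div_const 2) (hqx.neg.div_const 2)
      (hasDerivAt_const x 0) (hq.div_const 2)
  have hQ₃₁₂ : HasDerivAt (fun y => (qxx y - 2 * q y ^ 2) / 4) ((qxxx - 4 * q x * qx x) / 4) x :=
    ((hqxx.sub ((hq.pow 2).const_mul 2)).div_const 4).congr_deriv (by ring)
  have hQ₃ : HasDerivAt (fun y => !![qx y / 4, (qxx y - 2 * q y ^ 2) / 4; -(q y) / 2, -(qx y) / 4])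
      !![qxx x / 4, (qxxx - 4 * q x * qx x) / 4; -(qx x) / 2, -(qxx x) / 4] x :=
    Matrix.hasDerivAt_fin_two (hqx.div_const 4) hQ₃₁₂ (hq.neg.div_const 2) (hqx.neg.div_const 4)
  exact ((((hasDerivAt_const x (lam ^ 3 • a)).add (hu.const_smul (lam ^ 2))).add
    (hQ₂.const_smul lam)).add hQ₃).deriv.trans (by rw [zero_add])

theorem kdv_zeroCurvature_eq (q qx qxx qxxx qt : ℝ) :
    let a : Matrix (Fin 2) (Fin 2) ℝ := !![1, 0; 0, -1]
    let N := lam ^ 3 • a + lam ^ 2 • !![0, q; 1, 0] + lam • !![-q / 2, -qx / 2; 0, q / 2]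
      + !![qx / 4, (qxx - 2 * q ^ 2) / 4; -q / 2, -qx / 4]
    (lam ^ 2 • !![0, qx; 0, 0] + lam • !![-qx / 2, -qxx / 2; 0, qx / 2]
        + !![qxx / 4, (qxxx - 4 * q * qx) / 4; -qx / 2, -qxx / 4]) - !![0, qt; 0, 0]
      + ((lam • a + !![0, q; 1, 0]) * N - N * (lam • a + !![0, q; 1, 0]))
      = !![0, (1 / 4) * (qxxx - 6 * q * qx) - qt; 0, 0] := by
  ext i j
  fin_cases i <;> fin_cases j <;>
    simp <;> ring

end KdVLaxPair

/-- Lax pair for the KdV equation: with `a = diag(1,−1)`, `u = [[0,q],[1,0]]`,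
`Q₂ = [[−q/2, −q_x/2],[0, q/2]]`, `Q₃ = [[q_x/4, (q_xx − 2q²)/4],[−q/2, −q_x/4]]`, a smooth
`q : ℝ² → ℝ` satisfies the KdV equation `q_t = (1/4)(q_xxx − 6qq_x)` iff for every `λ ∈ ℝ`
the zero-curvature equation
`∂_x(aλ³ + uλ² + Q₂λ + Q₃) − ∂_t(aλ + u) + [aλ + u, aλ³ + uλ² + Q₂λ + Q₃] = 0`
holds identically. -/
theorem stmt14 (q : ℝ → ℝ → ℝ)
    (hq : ContDiff ℝ (⊤ : ℕ∞) fun p : ℝ × ℝ => q p.1 p.2)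
    -- partial derivatives of q
    (qx qxx qxxx qt : ℝ → ℝ → ℝ)
    (hqx : ∀ x t, qx x t = deriv (fun y => q y t) x)
    (hqxx : ∀ x t, qxx x t = deriv (fun y => qx y t) x)
    (hqxxx : ∀ x t, qxxx x t = deriv (fun y => qxx y t) x)
    (hqt : ∀ x t, qt x t = deriv (fun s => q x s) t)
    -- the matrices a, u, Q₂, Q₃
    (a : Matrix (Fin 2) (Fin 2) ℝ) (ha : a = !![1, 0; 0, -1])
    (u Q₂ Q₃ : ℝ → ℝ → Matrix (Fin 2) (Fin 2) ℝ)
    (hu : ∀ x t, u x t = !![0, q x t; 1, 0])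
    (hQ₂ : ∀ x t, Q₂ x t = !![-(q x t) / 2, -(qx x t) / 2; 0, q x t / 2])
    (hQ₃ : ∀ x t, Q₃ x t = !![qx x t / 4, (qxx x t - 2 * q x t ^ 2) / 4;
                              -(q x t) / 2, -(qx x t) / 4]) :
    -- KdV equation
    (∀ x t, qt x t = (1 / 4) * (qxxx x t - 6 * q x t * qx x t))
    ↔
    -- zero-curvature equation for every λ
    (∀ lam : ℝ, ∀ x t : ℝ,
      deriv (fun y => lam ^ 3 • a + lam ^ 2 • u y t + lam • Q₂ y t + Q₃ y t) x
        - deriv (fun s => lam • a + u x s) t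
        + ((lam • a + u x t)
              * (lam ^ 3 • a + lam ^ 2 • u x t + lam • Q₂ x t + Q₃ x t)
            - (lam ^ 3 • a + lam ^ 2 • u x t + lam • Q₂ x t + Q₃ x t)
              * (lam • a + u x t))
      = 0) := by
  have hqx_smooth := hq.of_eq_deriv_left (n := (⊤ : ℕ∞)) hqx
  have hqxx_smooth := hqx_smooth.of_eq_deriv_left (n := (⊤ : ℕ∞)) hqxx
  have hq_x := hq.hasDerivAt_left (by simp) hqx
  have hqx_x := hqx_smooth.hasDerivAt_left (by simp) hqxx
  have hqxx_x := hqxx_smooth.hasDerivAt_left (by simp) hqxxx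
  have hq_t := hq.hasDerivAt_right (by simp) hqt
  have key : ∀ lam x t : ℝ,
      deriv (fun y => lam ^ 3 • a + lam ^ 2 • u y t + lam • Q₂ y t + Q₃ y t) x
        - deriv (fun s => lam • a + u x s) t
        + ((lam • a + u x t) * (lam ^ 3 • a + lam ^ 2 • u x t + lam • Q₂ x t + Q₃ x t)
            - (lam ^ 3 • a + lam ^ 2 • u x t + lam • Q₂ x t + Q₃ x t) * (lam • a + u x t))
      = !![0, (1 / 4) * (qxxx x t - 6 * q x t * qx x t) - qt x t; 0, 0] := by
    intro lam x t
    simp only [hu, hQ₂, hQ₃]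
    rw [deriv_kdv_lax_space lam a (q := (q · t)) (qx := (qx · t)) (qxx := (qxx · t))
      (hq_x x t) (hqx_x x t) (hqxx_x x t), deriv_kdv_lax_time lam a (hq_t x t), ha]
    exact kdv_zeroCurvature_eq lam _ _ _ _ _
  simp [key, ← Matrix.ext_iff, Fin.forall_fin_two, sub_eq_zero, eq_comm (a := qt _ _)]
end

section
/- (Characterization of the KdV reality condition.) Let (ξ_j)_{j∈ℤ} be a finitely supported family of trace-free real 2×2 matrices, written ξ_j = [[A_j, B_j],[C_j, −A_j]], and let φ(λ) = [[1, λ],[0, 1]]. Then the identity φ(λ)⁻¹·(Σ_j ξ_j λ^j)·φ(λ) = φ(−λ)⁻¹·(Σ_j ξ_j (−λ)^j)·φ(−λ) holds for all real λ ≠ 0 if and only if for every j ∈ ℤ one has C_{2j+1} = 0, A_{2j+1} = C_{2j}, and B_{2j+1} = −2A_{2j}. -/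
/-!
With `N = !![0, 1; 0, 0]` we have `φ λ = 1 + λ • N` and `(φ λ)⁻¹ = 1 - λ • N`, so
`(φ λ)⁻¹ * (∑ᶠ j, λ ^ j • ξ j) * φ λ` is again a Laurent polynomial `∑ᶠ j, λ ^ j • η j`, where
`η j` is built from `ξ j`, `ξ (j - 1)` and `ξ (j - 2)`. The identity to characterize says that
this Laurent polynomial is even, which by linear independence of the monomials means that
`η j = 0` for every odd `j`; for trace-free `ξ` this is exactly the stated system of equations.
-/

open Function Matrix

section Laurent

variable {K V : Type*} [Field K] [AddCommGroup V] [Module K V]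

lemma smul_finsum_zpow_smul {t : K} (ht : t ≠ 0) (v : ℤ → V) (k : ℤ) :
    t ^ k • ∑ᶠ j, t ^ j • v j = ∑ᶠ j, t ^ j • v (j - k) := by
  rw [smul_finsum, ← finsum_comp_equiv (Equiv.addRight k) (f := fun j => t ^ j • v (j - k))]
  refine finsum_congr fun j => ?_
  simp [smul_smul, ← zpow_add₀ ht, add_comm]

variable [CharZero K]

lemma zpow_two_injective : Injective fun j : ℤ => (2 : K) ^ j := by
  intro i j hij
  have : (((2 : ℚ) ^ i : ℚ) : K) = ((2 : ℚ) ^ j : ℚ) := by push_cast; exact hij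
  exact zpow_right_injective₀ (a := (2 : ℚ)) (by norm_num) (by norm_num) (Rat.cast_injective this)

/-- The monomials `t ↦ t ^ j` are pairwise distinct characters of `Kˣ`, hence linearly
independent (Dedekind–Artin). -/
lemma eq_zero_of_forall_finsum_zpow_mul_eq_zero {g : ℤ → K} (hg : HasFiniteSupport g)
    (h : ∀ t : K, t ≠ 0 → ∑ᶠ j, t ^ j * g j = 0) : g = 0 := by
  classical
  let χ : ℤ → Kˣ →* K := fun j => (Units.coeHom K).comp (zpowGroupHom j)
  have hχ : Injective χ := fun i j hij => zpow_two_injective (K := K) <| by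
    simpa [χ] using DFunLike.congr_fun hij (Units.mk0 2 two_ne_zero)
  have hind := (linearIndependent_monoidHom Kˣ K).comp χ hχ
  funext j
  by_contra hj
  refine hj (linearIndependent_iff'.mp hind hg.toFinset g ?_ j (hg.mem_toFinset.mpr hj))
  funext u
  have hsupp : support (fun j => (u : K) ^ j * g j) ⊆ hg.toFinset :=
    (support_mul_subset_right _ g).trans hg.coe_toFinset.ge
  have hu := h u u.ne_zero
  rw [finsum_eq_sum_of_support_subset _ hsupp] at hu
  simpa [χ, Finset.sum_apply, mul_comm] using hu

lemma eq_zero_of_forall_finsum_zpow_smul_eq_zero {v : ℤ → V} (hv : HasFiniteSupport v)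
    (h : ∀ t : K, t ≠ 0 → ∑ᶠ j, t ^ j • v j = 0) : v = 0 := by
  funext j
  refine (Module.forall_dual_apply_eq_zero_iff K (v j)).mp fun φ => ?_
  have hφv : HasFiniteSupport fun j => φ (v j) := hv.fun_comp (map_zero φ)
  refine congr_fun (eq_zero_of_forall_finsum_zpow_mul_eq_zero hφv fun t ht => ?_) j
  simpa [map_finsum φ (hv.fun_smul_right _)] using congr_arg φ (h t ht)

lemma finsum_zpow_smul_eq_neg_iff {v : ℤ → V} (hv : HasFiniteSupport v) :
    (∀ t : K, t ≠ 0 → ∑ᶠ j, t ^ j • v j = ∑ᶠ j, (-t) ^ j • v j) ↔ ∀ j, v (2 * j + 1) = 0 := by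
  constructor
  · intro h j
    have hodd : (fun j => (1 - (-1 : K) ^ j) • v j) = 0 := by
      refine eq_zero_of_forall_finsum_zpow_smul_eq_zero (K := K) (hv.fun_smul_right _)
        fun t ht => ?_
      have hneg (j : ℤ) : (-t) ^ j = t ^ j * (-1) ^ j := by rw [← mul_zpow, mul_neg_one]
      simp_rw [smul_smul, mul_sub, mul_one, sub_smul, ← hneg]
      rw [finsum_sub_distrib (hv.fun_smul_right _) (hv.fun_smul_right _), h t ht, sub_self]
    simpa [Odd.neg_one_zpow (odd_two_mul_add_one j)] using congr_fun hodd (2 * j + 1)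
  · intro h t _
    refine finsum_congr fun j => ?_
    rcases Int.even_or_odd j with heven | ⟨m, rfl⟩
    · rw [heven.neg_zpow]
    · rw [h m, smul_zero, smul_zero]

end Laurent

section UnipotentConj

variable {R : Type*} [Ring R]

/-- The coefficients of `(1 - t • N) * (∑ᶠ j, t ^ j • ξ j) * (1 + t • N)` as a Laurent
polynomial in `t`. -/
def unipotentConjCoeff (N : R) (ξ : ℤ → R) (j : ℤ) : R :=
  ξ j + (ξ (j - 1) * N - N * ξ (j - 1)) - N * ξ (j - 2) * N

lemma one_sub_smul_mul_finsum_zpow_smul_mul_one_add_smul {K : Type*} [Field K] [Algebra K R]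
    (N : R) {ξ : ℤ → R} (hξ : HasFiniteSupport ξ) {t : K} (ht : t ≠ 0) :
    (1 - t • N) * (∑ᶠ j, t ^ j • ξ j) * (1 + t • N) =
      ∑ᶠ j, t ^ j • unipotentConjCoeff N ξ j := by
  set S := ∑ᶠ j, t ^ j • ξ j
  have hexpand : (1 - t • N) * S * (1 + t • N) =
      S + t ^ (1 : ℤ) • (S * N - N * S) - t ^ (2 : ℤ) • (N * S * N) := by
    simp only [mul_add, sub_mul, mul_one, one_mul, smul_mul_assoc, mul_smul_comm, smul_smul,
      zpow_one, zpow_two, smul_sub, mul_assoc]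
    abel
  have hSN : S * N - N * S = ∑ᶠ j, t ^ j • (ξ j * N - N * ξ j) := by
    rw [finsum_mul' _ _ (by fun_prop), mul_finsum' _ _ (by fun_prop),
      ← finsum_sub_distrib (by fun_prop) (by fun_prop)]
    simp only [smul_mul_assoc, mul_smul_comm, smul_sub]
  have hNSN : N * S * N = ∑ᶠ j, t ^ j • (N * ξ j * N) := by
    rw [mul_finsum' _ _ (by fun_prop), finsum_mul' _ _ (by fun_prop)]
    simp only [smul_mul_assoc, mul_smul_comm]
  have hshift (k : ℤ) : Injective fun j : ℤ => j - k := sub_left_injective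
  rw [hexpand, hSN, hNSN, smul_finsum_zpow_smul ht, smul_finsum_zpow_smul ht,
    ← finsum_add_distrib (by fun_prop) (by fun_prop (disch := exact hshift _)),
    ← finsum_sub_distrib (by fun_prop (disch := exact hshift _))
      (by fun_prop (disch := exact hshift _))]
  simp only [unipotentConjCoeff, smul_add, smul_sub]

end UnipotentConj

section FinTwo

variable {K : Type*} [CommRing K]

lemma Matrix.inv_one_add_of_mul_self_eq_zero {n : Type*} [Fintype n] [DecidableEq n]
    {N : Matrix n n K} (hN : N * N = 0) : (1 + N)⁻¹ = 1 - N :=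
  inv_eq_left_inv (by rw [sub_mul, one_mul, mul_add, mul_one, hN, add_zero, add_sub_cancel_right])

lemma unipotentConjCoeff_fin_two (ξ : ℤ → Matrix (Fin 2) (Fin 2) K) (j : ℤ) :
    unipotentConjCoeff !![0, 1; 0, 0] ξ j =
      !![ξ j 0 0 - ξ (j - 1) 1 0, ξ j 0 1 + ξ (j - 1) 0 0 - ξ (j - 1) 1 1 - ξ (j - 2) 1 0;
         ξ j 1 0, ξ j 1 1 + ξ (j - 1) 1 0] := by
  ext i k
  fin_cases i <;> fin_cases k <;>
    simp [unipotentConjCoeff, Matrix.mul_apply, Fin.sum_univ_two, vecMul, dotProduct] <;> ring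

lemma unipotentConjCoeff_fin_two_odd_eq_zero_iff (ξ : ℤ → Matrix (Fin 2) (Fin 2) K)
    (htr : ∀ j, (ξ j).trace = 0) :
    (∀ j, unipotentConjCoeff !![0, 1; 0, 0] ξ (2 * j + 1) = 0) ↔
      ∀ j, ξ (2 * j + 1) 1 0 = 0 ∧ ξ (2 * j + 1) 0 0 = ξ (2 * j) 1 0 ∧
        ξ (2 * j + 1) 0 1 = -2 * ξ (2 * j) 0 0 := by
  have hD (j : ℤ) : ξ j 1 1 = -ξ j 0 0 := by
    have := htr j
    rw [trace_fin_two] at this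
    linear_combination this
  have h1 (j : ℤ) : 2 * j + 1 - 1 = 2 * j := by ring
  have h2 (j : ℤ) : 2 * j + 1 - 2 = 2 * (j - 1) + 1 := by ring
  simp only [unipotentConjCoeff_fin_two, ← Matrix.ext_iff, Fin.forall_fin_two, of_apply,
    cons_val', cons_val_zero, cons_val_one, empty_val', cons_val_fin_one, Matrix.zero_apply,
    h1, h2, hD]
  -- the `(0, 1)` entry at `2 * j + 1` also involves `ξ (2 * j - 1) 1 0`, killed by the case `j - 1`
  constructor
  · intro h j
    obtain ⟨⟨hA, hB⟩, hC, -⟩ := h j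
    have hC' := (h (j - 1)).2.1
    exact ⟨hC, by linear_combination hA, by linear_combination hB + hC'⟩
  · intro h j
    obtain ⟨hC, hA, hB⟩ := h j
    have hC' := (h (j - 1)).1
    exact ⟨⟨by linear_combination hA, by linear_combination hB - hC'⟩, hC,
      by linear_combination -hA⟩

end FinTwo

/-- Characterization of the KdV reality condition: for a finitely supported
family `(ξ_j)_{j∈ℤ}` of trace-free real `2×2` matrices `ξ_j = [[A_j,B_j],[C_j,−A_j]]` and
`φ(λ) = [[1,λ],[0,1]]`, the identity
`φ(λ)⁻¹·(Σ_j ξ_j λ^j)·φ(λ) = φ(−λ)⁻¹·(Σ_j ξ_j (−λ)^j)·φ(−λ)` holds for all real `λ ≠ 0`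
iff for every `j ∈ ℤ`: `C_{2j+1} = 0`, `A_{2j+1} = C_{2j}`, and `B_{2j+1} = −2A_{2j}`. -/
theorem stmt15 (ξ : ℤ → Matrix (Fin 2) (Fin 2) ℝ)
    (hsupp : (Function.support ξ).Finite)
    (htr : ∀ j, (ξ j).trace = 0) :
    (∀ lam : ℝ, lam ≠ 0 →
      (!![1, lam; 0, 1])⁻¹ * (∑ᶠ j : ℤ, lam ^ j • ξ j) * !![1, lam; 0, 1]
        = (!![1, -lam; 0, 1])⁻¹ * (∑ᶠ j : ℤ, (-lam) ^ j • ξ j) * !![1, -lam; 0, 1])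
    ↔
    (∀ j : ℤ,
      ξ (2 * j + 1) 1 0 = 0 ∧
      ξ (2 * j + 1) 0 0 = ξ (2 * j) 1 0 ∧
      ξ (2 * j + 1) 0 1 = -2 * ξ (2 * j) 0 0) := by
  have hφ (t : ℝ) : !![1, t; 0, 1] = 1 + t • !![0, 1; 0, 0] := by
    ext i k; fin_cases i <;> fin_cases k <;> simp
  have hconj (t : ℝ) (ht : t ≠ 0) :
      (!![1, t; 0, 1])⁻¹ * (∑ᶠ j : ℤ, t ^ j • ξ j) * !![1, t; 0, 1] =
        ∑ᶠ j : ℤ, t ^ j • unipotentConjCoeff !![0, 1; 0, 0] ξ j := by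
    rw [hφ, Matrix.inv_one_add_of_mul_self_eq_zero
      (by ext i k; fin_cases i <;> fin_cases k <;> simp)]
    exact one_sub_smul_mul_finsum_zpow_smul_mul_one_add_smul _ hsupp ht
  have hη : HasFiniteSupport (unipotentConjCoeff !![0, 1; 0, 0] ξ) := by
    have hξ : HasFiniteSupport ξ := hsupp
    unfold unipotentConjCoeff
    fun_prop (disch := exact sub_left_injective)
  rw [← unipotentConjCoeff_fin_two_odd_eq_zero_iff ξ htr, ← finsum_zpow_smul_eq_neg_iff (K := ℝ) hη]
  refine forall₂_congr fun t ht => ?_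
  rw [hconj t ht, hconj (-t) (neg_ne_zero.mpr ht)]
end

section
/- (Degeneracy of the pairing on the KdV loop algebra.) Let V be the real vector space of finitely supported families ξ = (ξ_j)_{j∈ℤ} of matrices ξ_j = [[A_j, B_j],[C_j, −A_j]] ∈ sl(2,ℝ) satisfying the KdV reality condition: C_{2j+1} = 0, A_{2j+1} = C_{2j}, and B_{2j+1} = −2A_{2j} for all j ∈ ℤ. For an integer k define the bilinear form ⟨ξ, η⟩_{Λ_k} = Σ_{i∈ℤ} tr(ξ_i η_{k−1−i}) on V. If k is even then this form is degenerate on V (there exists a nonzero ξ ∈ V with ⟨ξ, η⟩_{Λ_k} = 0 for all η ∈ V), and if k is odd then it is non-degenerate on V (⟨ξ, η⟩_{Λ_k} = 0 for all η ∈ V implies ξ = 0). -/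
open Matrix

/-- Membership in the space `V`: a finitely supported family `(ξ_j)_{j∈ℤ}` of trace-free real
`2×2` matrices `ξ_j = [[A_j,B_j],[C_j,−A_j]]` satisfying the KdV reality condition
`C_{2j+1} = 0`, `A_{2j+1} = C_{2j}`, `B_{2j+1} = −2A_{2j}` for all `j ∈ ℤ`. -/
def KdVReal (ξ : ℤ → Matrix (Fin 2) (Fin 2) ℝ) : Prop :=
  (Function.support ξ).Finite ∧
  (∀ j, (ξ j).trace = 0) ∧
  (∀ j : ℤ,
    ξ (2 * j + 1) 1 0 = 0 ∧
    ξ (2 * j + 1) 0 0 = ξ (2 * j) 1 0 ∧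
    ξ (2 * j + 1) 0 1 = -2 * ξ (2 * j) 0 0)

/-- The bilinear form `⟨ξ, η⟩_{Λ_k} = Σ_{i∈ℤ} tr(ξ_i η_{k−1−i})`. -/
noncomputable def kdvPairing (k : ℤ) (ξ η : ℤ → Matrix (Fin 2) (Fin 2) ℝ) : ℝ :=
  ∑ᶠ i : ℤ, (ξ i * η (k - 1 - i)).trace

/-- Test family supported at `{2m, 2m+1}`. -/
noncomputable def testFam (m : ℤ) (N : Matrix (Fin 2) (Fin 2) ℝ) :
    ℤ → Matrix (Fin 2) (Fin 2) ℝ :=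
  fun i => if i = 2 * m then N
    else if i = 2 * m + 1 then !![N 1 0, -2 * N 0 0; 0, -(N 1 0)] else 0

lemma testFam_KdV (m : ℤ) (N : Matrix (Fin 2) (Fin 2) ℝ) (hN : N.trace = 0) :
    KdVReal (testFam m N) := by
  refine ⟨?_, ?_, ?_⟩
  · apply Set.Finite.subset ((Set.finite_singleton (2*m+1)).insert (2*m))
    intro i hi
    by_contra h
    simp only [Set.mem_insert_iff, Set.mem_singleton_iff] at h
    push_neg at h
    exact hi (by simp [testFam, if_neg h.1, if_neg h.2])
  · intro j
    unfold testFam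
    split_ifs with h1 h2
    · exact hN
    · simp [Matrix.trace_fin_two]
    · simp
  · intro j
    by_cases h : j = m
    · subst h
      simp [testFam, if_neg (show (2:ℤ)*j+1 ≠ 2*j by omega)]
    · have h1 : (2:ℤ)*j+1 ≠ 2*m := by omega
      have h2 : (2:ℤ)*j+1 ≠ 2*m+1 := by omega
      have h3 : (2:ℤ)*j ≠ 2*m := by omega
      have h4 : (2:ℤ)*j ≠ 2*m+1 := by omega
      simp [testFam, if_neg h1, if_neg h2, if_neg h3, if_neg h4, if_neg h]

lemma pairing_testFam (k t m : ℤ) (hk : k = 2*t+1) (ξ : ℤ → Matrix (Fin 2) (Fin 2) ℝ)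
    (N : Matrix (Fin 2) (Fin 2) ℝ) :
    kdvPairing k ξ (testFam m N)
      = (ξ (2*(t-m)) * N).trace
        + (ξ (2*(t-m)-1) * !![N 1 0, -2 * N 0 0; 0, -(N 1 0)]).trace := by
  unfold kdvPairing
  have hsub : Function.support (fun i => (ξ i * testFam m N (k - 1 - i)).trace)
      ⊆ (({2*(t-m), 2*(t-m)-1} : Finset ℤ) : Set ℤ) := by
    intro i hi
    by_contra h
    simp only [Finset.coe_insert, Finset.coe_singleton, Set.mem_insert_iff,
      Set.mem_singleton_iff] at h
    push_neg at h
    have h1 : k - 1 - i ≠ 2*m := by omega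
    have h2 : k - 1 - i ≠ 2*m+1 := by omega
    exact hi (by simp [testFam, if_neg h1, if_neg h2])
  rw [finsum_eq_finset_sum_of_support_subset _ hsub,
    Finset.sum_pair (by omega : 2*(t-m) ≠ 2*(t-m)-1)]
  congr 2
  · have : k - 1 - 2*(t-m) = 2*m := by omega
    rw [this]
    simp [testFam]
  · have : k - 1 - (2*(t-m)-1) = 2*m+1 := by omega
    rw [this]
    simp [testFam, if_neg (show (2:ℤ)*m+1 ≠ 2*m by omega)]

/-- Degeneracy of the pairing on the KdV loop algebra: if `k` is even the form
`⟨·,·⟩_{Λ_k}` is degenerate on `V`, and if `k` is odd it is non-degenerate on `V`. -/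
theorem stmt16 (k : ℤ) :
    (Even k →
      ∃ ξ : ℤ → Matrix (Fin 2) (Fin 2) ℝ, KdVReal ξ ∧ ξ ≠ 0 ∧
        ∀ η : ℤ → Matrix (Fin 2) (Fin 2) ℝ, KdVReal η → kdvPairing k ξ η = 0) ∧
    (Odd k →
      ∀ ξ : ℤ → Matrix (Fin 2) (Fin 2) ℝ, KdVReal ξ →
        (∀ η : ℤ → Matrix (Fin 2) (Fin 2) ℝ, KdVReal η → kdvPairing k ξ η = 0) →
        ξ = 0) := by
  constructor
  · -- even case
    rintro ⟨s, hs⟩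
    refine ⟨fun i => if i = 0 then !![0,1;0,0] else 0, ⟨?_, ?_, ?_⟩, ?_, ?_⟩
    · apply Set.Finite.subset (Set.finite_singleton 0)
      intro i hi
      by_contra h
      simp only [Set.mem_singleton_iff] at h
      exact hi (by simp [if_neg h])
    · intro j
      by_cases h : j = 0 <;> simp [h, Matrix.trace_fin_two]
    · intro j
      have h1 : (2:ℤ)*j+1 ≠ 0 := by omega
      by_cases h : j = 0
      · subst h; norm_num
      · have h2 : (2:ℤ)*j ≠ 0 := by omega
        simp [if_neg h1, if_neg h2, if_neg h]
    · intro h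
      have := congrFun h 0
      simp only [Pi.zero_apply, if_pos rfl] at this
      have := congrFun (congrFun this 0) 1
      simp at this
    · intro η hη
      unfold kdvPairing
      have hsub : Function.support (fun i =>
          (((fun i => if i = (0:ℤ) then !![(0:ℝ),1;0,0] else 0) i) * η (k - 1 - i)).trace)
          ⊆ (({0} : Finset ℤ) : Set ℤ) := by
        intro i hi
        by_contra h
        simp only [Finset.coe_singleton, Set.mem_singleton_iff] at h
        exact hi (by simp [if_neg h])
      rw [finsum_eq_finset_sum_of_support_subset _ hsub, Finset.sum_singleton]
      have hk1 : k - 1 - 0 = 2*(s-1)+1 := by omega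
      have h10 := (hη.2.2 (s-1)).1
      simp only [if_pos rfl, hk1]
      simp [Matrix.trace_fin_two, Matrix.mul_apply, Fin.sum_univ_two, Matrix.vecMul,
        dotProduct, h10]
  · -- odd case
    rintro ⟨t, ht⟩ ξ hξ hpair
    have key : ∀ (n : ℤ) (N : Matrix (Fin 2) (Fin 2) ℝ), N.trace = 0 →
        (ξ (2*n) * N).trace
          + (ξ (2*n-1) * !![N 1 0, -2 * N 0 0; 0, -(N 1 0)]).trace = 0 := by
      intro n N hN
      have h := hpair (testFam (t-n) N) (testFam_KdV _ _ hN)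
      rw [pairing_testFam k t (t-n) ht ξ N] at h
      have hn : t - (t - n) = n := by omega
      rwa [hn] at h
    -- trace conditions as entries
    have htr : ∀ j, ξ j 0 0 + ξ j 1 1 = 0 := by
      intro j
      have := hξ.2.1 j
      simpa [Matrix.trace_fin_two] using this
    -- odd-index (1,0) entries vanish
    have hodd10 : ∀ n : ℤ, ξ (2*n-1) 1 0 = 0 := by
      intro n
      have := (hξ.2.2 (n-1)).1
      have he : 2*(n-1)+1 = 2*n-1 := by omega
      rwa [he] at this
    -- step 1 : C entries (1,0) of even indices vanish
    have hC : ∀ n : ℤ, ξ (2*n) 1 0 = 0 := by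
      intro n
      have h := key n !![0,1;0,0] (by simp [Matrix.trace_fin_two])
      simp only [Matrix.trace_fin_two, Matrix.mul_apply, Fin.sum_univ_two] at h
      norm_num at h
      simpa using h
    -- step 2 : A entries vanish
    have hA : ∀ n : ℤ, ξ (2*n) 0 0 = 0 := by
      intro n
      have h := key n !![1,0;0,-1] (by simp [Matrix.trace_fin_two])
      simp only [Matrix.trace_fin_two, Matrix.mul_apply, Fin.sum_univ_two] at h
      norm_num [hodd10 n] at h
      have := htr (2*n)
      linarith
    -- step 3 : B entries vanish
    have hoddA : ∀ n : ℤ, ξ (2*n-1) 0 0 = 0 := by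
      intro n
      have h1 := (hξ.2.2 (n-1)).2.1
      have he : 2*(n-1)+1 = 2*n-1 := by omega
      rw [he] at h1
      rw [h1]
      exact hC (n-1)
    have hB : ∀ n : ℤ, ξ (2*n) 0 1 = 0 := by
      intro n
      have h := key n !![0,0;1,0] (by simp [Matrix.trace_fin_two])
      simp only [Matrix.trace_fin_two, Matrix.mul_apply, Fin.sum_univ_two] at h
      have h1 := hoddA n
      have h2 := htr (2*n-1)
      norm_num [h1] at h h2 ⊢
      linarith
    -- all D entries
    have hD : ∀ n : ℤ, ξ (2*n) 1 1 = 0 := fun n => by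
      have := htr (2*n); have := hA n; linarith
    -- odd entries
    have hodd00 : ∀ j : ℤ, ξ (2*j+1) 0 0 = 0 := fun j => by
      rw [(hξ.2.2 j).2.1]; exact hC j
    have hodd01 : ∀ j : ℤ, ξ (2*j+1) 0 1 = 0 := fun j => by
      rw [(hξ.2.2 j).2.2, hA j]; ring
    have hodd11 : ∀ j : ℤ, ξ (2*j+1) 1 1 = 0 := fun j => by
      have := htr (2*j+1); have := hodd00 j; linarith
    funext i
    rcases Int.even_or_odd i with ⟨j, hj⟩ | ⟨j, hj⟩
    · have hi : i = 2*j := by omega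
      subst hi
      ext a b
      fin_cases a <;> fin_cases b <;>
        simp [hA j, hB j, hC j, hD j]
    · subst hj
      ext a b
      fin_cases a <;> fin_cases b <;>
        simp [hodd00 j, hodd01 j, (hξ.2.2 j).1, hodd11 j]
end
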